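/- arXiv:2405.18680 — 9 statements merged into one kernel-verified Lean document; each statement's English description precedes it below -/
import Mathlib

section
/- For all sufficiently large n, for every family of n distinct points x_1, …, x_n in a type 𝒳 and every distance function D with D(x_i, x_i) = 0 for all i and D(x_i, x_j) > 0 whenever x_i ≠ x_j, there exists a navigable directed graph on {1, …, n} whose edge set E has at most 2·n^{3/2}·√(ln n) edges (so the average out-degree is at most 2·√(n·ln n)). -/
open Finset

lemma neg_log_one_sub {p : ℝ} (h0 : 0 ≤ p) (h1 : p < 1) :
    Real.log (1 - p) ≤ -(p + p^2/4) := by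
  have h2 : 0 < 1 - p/2 := by linarith
  have h3 : 0 < 1 - p := by linarith
  have hA : Real.log ((1-p)/(1-p/2)) ≤ (1-p)/(1-p/2) - 1 :=
    Real.log_le_sub_one_of_pos (by positivity)
  have hB : Real.log (1-p/2) ≤ -(p/2) := by
    have := Real.log_le_sub_one_of_pos h2
    linarith
  have hlogdiv : Real.log ((1-p)/(1-p/2)) = Real.log (1-p) - Real.log (1-p/2) :=
    Real.log_div (ne_of_gt h3) (ne_of_gt h2)
  have hfrac : (1-p)/(1-p/2) - 1 ≤ -(p/2) - p^2/4 := by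
    rw [div_sub_one (ne_of_gt h2), div_le_iff₀ h2]
    nlinarith [pow_nonneg h0 3]
  linarith

lemma hitting_aux {n : ℕ} (hn : 0 < n) {ι : Type*} (A : ι → Finset (Fin n)) (K : ℕ)
    (hKn : (K:ℝ) ≤ n) (m : ℕ) :
    ∀ (T : Finset ι), (∀ t ∈ T, K ≤ (A t).card) →
      ∃ H : Finset (Fin n), H.card ≤ m ∧
        (((T.filter (fun t => ∀ v ∈ H, v ∉ A t)).card : ℝ) ≤
          (T.card : ℝ) * (1 - (K:ℝ)/n)^m) := by
  have hn' : (0:ℝ) < n := by exact_mod_cast hn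
  have h1p : (0:ℝ) ≤ 1 - (K:ℝ)/n := by
    rw [sub_nonneg, div_le_one hn']; exact hKn
  induction m with
  | zero =>
      intro T hT
      refine ⟨∅, le_rfl, ?_⟩
      simp
  | succ m ih =>
      intro T hT
      obtain ⟨v, -, hv⟩ := Finset.exists_max_image (univ : Finset (Fin n))
          (fun v => (T.filter (fun t => v ∈ A t)).card) ⟨⟨0, hn⟩, mem_univ _⟩
      have hsum : ∑ w : Fin n, (T.filter (fun t => w ∈ A t)).card = ∑ t ∈ T, (A t).card := by
        simp only [Finset.card_filter]
        rw [Finset.sum_comm]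
        congr 1
        ext t
        simp [Finset.sum_ite_mem, Finset.univ_inter]
      have hcount : K * T.card ≤ n * (T.filter (fun t => v ∈ A t)).card := by
        calc K * T.card = ∑ _t ∈ T, K := by rw [Finset.sum_const, smul_eq_mul, mul_comm]
          _ ≤ ∑ t ∈ T, (A t).card := Finset.sum_le_sum hT
          _ = ∑ w : Fin n, (T.filter (fun t => w ∈ A t)).card := hsum.symm
          _ ≤ n * (T.filter (fun t => v ∈ A t)).card := by
              have := Finset.sum_le_card_nsmul univ
                (fun w => (T.filter (fun t => w ∈ A t)).card)
                ((T.filter (fun t => v ∈ A t)).card) (fun w _ => hv w (mem_univ w))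
              simpa [smul_eq_mul] using this
      set T' := T.filter (fun t => v ∉ A t) with hT'
      have hsplit : (T.filter (fun t => v ∈ A t)).card + T'.card = T.card := by
        rw [hT']; exact Finset.card_filter_add_card_filter_not _
      have hT'card : (T'.card : ℝ) ≤ (T.card : ℝ) * (1 - (K:ℝ)/n) := by
        have h1 : (K:ℝ) * T.card ≤ n * (T.filter (fun t => v ∈ A t)).card := by
          exact_mod_cast hcount
        have h2 : (T'.card : ℝ) = (T.card : ℝ) - (T.filter (fun t => v ∈ A t)).card := by
          have := hsplit; push_cast [← this]; ring
        rw [h2]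
        rw [mul_sub, mul_one]
        have : (K:ℝ)/n * T.card ≤ (T.filter (fun t => v ∈ A t)).card := by
          rw [div_mul_eq_mul_div, div_le_iff₀ hn']
          linarith [h1]
        linarith
      obtain ⟨H', hc', hb'⟩ := ih T' (fun t ht => hT t (Finset.filter_subset _ _ ht))
      refine ⟨insert v H', le_trans (Finset.card_insert_le _ _) (by omega), ?_⟩
      have hsub : T.filter (fun t => ∀ w ∈ insert v H', w ∉ A t) ⊆
          T'.filter (fun t => ∀ w ∈ H', w ∉ A t) := by
        intro t ht
        simp only [mem_filter, hT'] at ht ⊢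
        exact ⟨⟨ht.1, ht.2 v (mem_insert_self _ _)⟩, fun w hw => ht.2 w (mem_insert_of_mem hw)⟩
      calc ((T.filter (fun t => ∀ w ∈ insert v H', w ∉ A t)).card : ℝ)
          ≤ ((T'.filter (fun t => ∀ w ∈ H', w ∉ A t)).card : ℝ) := by
            exact_mod_cast Finset.card_le_card hsub
        _ ≤ (T'.card : ℝ) * (1 - (K:ℝ)/n)^m := hb'
        _ ≤ ((T.card : ℝ) * (1 - (K:ℝ)/n)) * (1 - (K:ℝ)/n)^m :=
            mul_le_mul_of_nonneg_right hT'card (pow_nonneg h1p m)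
        _ = (T.card : ℝ) * (1 - (K:ℝ)/n)^(m+1) := by ring

lemma hitting {n : ℕ} (hn : 0 < n) {ι : Type*} (A : ι → Finset (Fin n)) (K : ℕ)
    (hKn : (K:ℝ) ≤ n) (m : ℕ) (T : Finset ι) (hT : ∀ t ∈ T, K ≤ (A t).card)
    (hsmall : (T.card : ℝ) * (1 - (K:ℝ)/n)^m < 1) :
    ∃ H : Finset (Fin n), H.card ≤ m ∧ ∀ t ∈ T, ∃ v ∈ H, v ∈ A t := by
  obtain ⟨H, hc, hb⟩ := hitting_aux hn A K hKn m T hT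
  refine ⟨H, hc, fun t ht => ?_⟩
  by_contra hcon
  push_neg at hcon
  have hmem : t ∈ T.filter (fun t => ∀ v ∈ H, v ∉ A t) := mem_filter.mpr ⟨ht, hcon⟩
  have h1 : (1:ℝ) ≤ ((T.filter (fun t => ∀ v ∈ H, v ∉ A t)).card : ℝ) := by
    exact_mod_cast Finset.card_pos.mpr ⟨t, hmem⟩
  linarith

/-- A directed graph on vertex set `Fin n` with edge set `E` is navigable for the
points `x` under the distance function `D` if, for every target `t` and every
vertex `s ≠ t`, some out-neighbor `v` of `s` is strictly closer to `x t`, or is at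
equal distance with a smaller index (ties broken toward smaller ids). -/
def Navigable {n : ℕ} {X : Type*} (x : Fin n → X) (D : X → X → ℝ)
    (E : Finset (Fin n × Fin n)) : Prop :=
  ∀ t s : Fin n, s ≠ t → ∃ v : Fin n, (s, v) ∈ E ∧
    (D (x t) (x v) < D (x t) (x s) ∨ (D (x t) (x v) = D (x t) (x s) ∧ v < s))

lemma exists_navigable (n : ℕ) (hn0 : 0 < n) (X : Type) (x : Fin n → X) (D : X → X → ℝ)
    (hinj : Function.Injective x)
    (hzero : ∀ i, D (x i) (x i) = 0)
    (hpos : ∀ i j, x i ≠ x j → 0 < D (x i) (x j))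
    (k m : ℕ)
    (hKn : ((k+1:ℕ):ℝ) ≤ n)
    (hpowlt : (n:ℝ) * (1 - ((k+1:ℕ):ℝ)/n)^m < 1) :
    ∃ E : Finset (Fin n × Fin n), Navigable x D E ∧ E.card ≤ n*k + n*m := by
  classical
  set prec : Fin n → Fin n → Fin n → Prop := fun t v s =>
    D (x t) (x v) < D (x t) (x s) ∨ (D (x t) (x v) = D (x t) (x s) ∧ v < s) with hprec
  set P : Fin n → Fin n → Finset (Fin n) := fun t s => univ.filter (fun v => prec t v s)
    with hP
  have hmemP : ∀ t v s, v ∈ P t s ↔ prec t v s := by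
    intro t v s; rw [hP]; simp
  have hirr : ∀ t v, ¬ prec t v v := by
    intro t v h
    rcases h with h | ⟨e, l⟩
    · exact lt_irrefl _ h
    · exact lt_irrefl v l
  have htrans : ∀ t u v s, prec t u v → prec t v s → prec t u s := by
    intro t u v s h1 h2
    rcases h1 with h1 | ⟨e1, l1⟩ <;> rcases h2 with h2 | ⟨e2, l2⟩
    · exact Or.inl (lt_trans h1 h2)
    · exact Or.inl (by rw [← e2]; exact h1)
    · exact Or.inl (by rw [e1]; exact h2)
    · exact Or.inr ⟨e1.trans e2, lt_trans l1 l2⟩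
  have hmono : ∀ t v s, prec t v s → P t v ⊂ P t s := by
    intro t v s h
    constructor
    · intro u hu
      rw [hmemP] at hu ⊢
      exact htrans t u v s hu h
    · intro hsub
      have h1 : v ∈ P t s := (hmemP t v s).mpr h
      exact hirr t v ((hmemP t v v).mp (hsub h1))
  have hinj_rank : ∀ t s s', (P t s).card = (P t s').card → s = s' := by
    intro t s s' h
    by_contra hne
    rcases lt_trichotomy (D (x t) (x s)) (D (x t) (x s')) with h1 | h1 | h1
    · exact absurd h (ne_of_lt (card_lt_card (hmono t s s' (Or.inl h1))))
    · rcases Ne.lt_or_gt hne with h2 | h2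
      · exact absurd h (ne_of_lt (card_lt_card (hmono t s s' (Or.inr ⟨h1, h2⟩))))
      · exact absurd h (ne_of_gt (card_lt_card (hmono t s' s (Or.inr ⟨h1.symm, h2⟩))))
    · exact absurd h (ne_of_gt (card_lt_card (hmono t s' s (Or.inl h1))))
  have hselfP : ∀ t s, s ≠ t → t ∈ P t s := by
    intro t s hst
    rw [hmemP]
    left
    rw [hzero t]
    exact hpos t s (hinj.ne (Ne.symm hst))
  set pick : Fin n → Fin n → Fin n := fun t s =>
    if h : (P t s).Nonempty then h.choose else t with hpickdef
  have hpick : ∀ t s, (P t s).Nonempty → pick t s ∈ P t s := by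
    intro t s h
    rw [hpickdef]
    simp only [dif_pos h]
    exact h.choose_spec
  set smallE : Fin n → Finset (Fin n × Fin n) := fun t =>
    (univ.filter (fun s => (P t s).Nonempty ∧ (P t s).card ≤ k)).image
      (fun s => (s, pick t s)) with hsmallE
  have hsmall_card : ∀ t, (smallE t).card ≤ k := by
    intro t
    rw [hsmallE]
    refine le_trans card_image_le ?_
    refine le_trans (card_le_card_of_injOn (fun s => (P t s).card)
      ?_ ?_ (t := Finset.Icc 1 k)) ?_
    · intro s hs
      simp only [mem_coe, mem_filter] at hs
      exact mem_Icc.mpr ⟨card_pos.mpr hs.2.1, hs.2.2⟩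
    · intro s _ s' _ h
      exact hinj_rank t s s' h
    · simp [Nat.card_Icc]
  have hH : ∀ s : Fin n, ∃ Hs : Finset (Fin n), Hs.card ≤ m ∧
      ∀ t ∈ univ.filter (fun t => k+1 ≤ (P t s).card), ∃ v ∈ Hs, v ∈ P t s := by
    intro s
    apply hitting hn0 (fun t => P t s) (k+1) hKn m _
      (fun t ht => (mem_filter.mp ht).2)
    have h1 : ((univ.filter (fun t => k+1 ≤ (P t s).card)).card : ℝ) ≤ (n:ℝ) := by
      exact_mod_cast le_trans (card_filter_le _ _) (by simp)
    have h2 : (0:ℝ) ≤ (1 - ((k+1:ℕ):ℝ)/n)^m := by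
      apply pow_nonneg
      rw [sub_nonneg, div_le_one (by exact_mod_cast hn0)]
      exact hKn
    calc ((univ.filter (fun t => k+1 ≤ (P t s).card)).card : ℝ) * (1 - ((k+1:ℕ):ℝ)/n)^m
        ≤ (n:ℝ) * (1 - ((k+1:ℕ):ℝ)/n)^m := mul_le_mul_of_nonneg_right h1 h2
      _ < 1 := hpowlt
  choose H hHcard hHhit using hH
  refine ⟨(univ.biUnion smallE) ∪ univ.biUnion (fun s => (H s).image (fun v => (s, v))),
    ?_, ?_⟩
  · intro t s hst
    have hts : t ∈ P t s := hselfP t s hst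
    have hne : (P t s).Nonempty := ⟨t, hts⟩
    by_cases hc : (P t s).card ≤ k
    · refine ⟨pick t s, ?_, ?_⟩
      · apply mem_union_left
        apply mem_biUnion.mpr ⟨t, mem_univ t, ?_⟩
        rw [hsmallE]
        exact mem_image.mpr ⟨s, mem_filter.mpr ⟨mem_univ s, hne, hc⟩, rfl⟩
      · exact (hmemP t (pick t s) s).mp (hpick t s hne)
    · push_neg at hc
      obtain ⟨v, hvH, hvP⟩ := hHhit s t (mem_filter.mpr ⟨mem_univ t, hc⟩)
      exact ⟨v, mem_union_right _ (mem_biUnion.mpr ⟨s, mem_univ s,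
        mem_image.mpr ⟨v, hvH, rfl⟩⟩), (hmemP t v s).mp hvP⟩
  · refine le_trans (card_union_le _ _) ?_
    apply add_le_add
    · refine le_trans card_biUnion_le ?_
      refine le_trans (Finset.sum_le_card_nsmul univ _ k (fun t _ => hsmall_card t)) ?_
      simp [smul_eq_mul]
    · refine le_trans card_biUnion_le ?_
      refine le_trans (Finset.sum_le_card_nsmul univ _ m
        (fun s _ => le_trans card_image_le (hHcard s))) ?_
      simp [smul_eq_mul]

set_option maxHeartbeats 1600000 in
/-- For all sufficiently large `n`, any `n` distinct points with a distance function
vanishing exactly on the diagonal admit a navigable graph with at most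
`2 n^{3/2} √(ln n)` edges. -/
theorem navigable_upper_bound :
    ∃ N : ℕ, ∀ n : ℕ, N ≤ n →
      ∀ (X : Type) (x : Fin n → X) (D : X → X → ℝ),
        Function.Injective x →
        (∀ i, D (x i) (x i) = 0) →
        (∀ i j, x i ≠ x j → 0 < D (x i) (x j)) →
        ∃ E : Finset (Fin n × Fin n), Navigable x D E ∧
          (E.card : ℝ) ≤ 2 * (n : ℝ) ^ ((3 : ℝ) / 2) * Real.sqrt (Real.log n) := by
  refine ⟨10000000, fun n hn X x D hinj hzero hpos => ?_⟩
  have hn0 : 0 < n := by omega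
  have hn0' : (0:ℝ) < n := by exact_mod_cast hn0
  have hnR : (10000000:ℝ) ≤ n := by exact_mod_cast hn
  have hln16 : (16:ℝ) ≤ Real.log n := by
    rw [Real.le_log_iff_exp_le hn0']
    calc Real.exp 16 = Real.exp 1 ^ (16:ℕ) := by
          rw [← Real.exp_nat_mul]; norm_num
      _ ≤ 2.7182818286 ^ (16:ℕ) := by
          apply pow_le_pow_left₀ (Real.exp_pos 1).le Real.exp_one_lt_d9.le
      _ ≤ 10000000 := by norm_num
      _ ≤ n := hnR
  have hlnpos : (0:ℝ) < Real.log n := by linarith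
  set L := Real.sqrt ((n:ℝ) * Real.log n) with hLdef
  have hL2 : L^2 = (n:ℝ) * Real.log n := Real.sq_sqrt (by positivity)
  have hL0 : 0 ≤ L := Real.sqrt_nonneg _
  have hL8 : (8:ℝ) ≤ L := by
    have h64 : (64:ℝ) ≤ (n:ℝ) * Real.log n := by
      have t1 : (n:ℝ)*16 ≤ (n:ℝ)*Real.log n := mul_le_mul_of_nonneg_left hln16 hn0'.le
      nlinarith [t1, hnR]
    have e8 : (8:ℝ) = Real.sqrt 64 := by
      rw [show (64:ℝ) = 8^2 by norm_num, Real.sqrt_sq (by norm_num : (0:ℝ) ≤ 8)]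
    rw [e8]; exact Real.sqrt_le_sqrt h64
  have hsqrt4 : (4:ℝ) ≤ Real.sqrt n := by
    have : (4:ℝ) = Real.sqrt 16 := by
      rw [show (16:ℝ) = 4^2 by norm_num, Real.sqrt_sq (by norm_num : (0:ℝ) ≤ 4)]
    rw [this]; exact Real.sqrt_le_sqrt (by linarith)
  have hsqrtsq : Real.sqrt n * Real.sqrt n = (n:ℝ) := Real.mul_self_sqrt hn0'.le
  have hlnhalf : Real.log n ≤ (n:ℝ)/2 := by
    have h1 : Real.log (Real.sqrt n) ≤ Real.sqrt n - 1 :=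
      Real.log_le_sub_one_of_pos (Real.sqrt_pos.mpr hn0')
    have h2 : Real.log n = 2 * Real.log (Real.sqrt n) := by
      rw [Real.log_sqrt hn0'.le]; ring
    nlinarith [mul_nonneg (sub_nonneg.mpr hsqrt4) (sub_nonneg.mpr hsqrt4), hsqrtsq, h1, h2]
  have hLn : L ≤ (n:ℝ) - 2 := by
    have h1 : (n:ℝ) * Real.log n ≤ ((n:ℝ)-2)^2 := by
      have t1 : (n:ℝ)*Real.log n ≤ (n:ℝ)*((n:ℝ)/2) :=
        mul_le_mul_of_nonneg_left hlnhalf hn0'.le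
      nlinarith [t1, hnR]
    calc L ≤ Real.sqrt (((n:ℝ)-2)^2) := Real.sqrt_le_sqrt h1
      _ = (n:ℝ) - 2 := Real.sqrt_sq (by nlinarith)
  set k := ⌈L⌉₊ with hkdef
  have hkL : (k:ℝ) < L + 1 := Nat.ceil_lt_add_one hL0
  have hLk : L ≤ (k:ℝ) := Nat.le_ceil L
  set K := k + 1 with hKdef
  have hKub : (K:ℝ) < L + 2 := by push_cast [hKdef]; linarith
  have hKlb : L + 1 ≤ (K:ℝ) := by push_cast [hKdef]; linarith
  have hKn : (K:ℝ) < n := by linarith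
  set p := (K:ℝ)/n with hpdef
  have hp0 : 0 < p := by positivity
  have hp1 : p < 1 := (div_lt_one hn0').mpr hKn
  set q := p + p^2/4 with hqdef
  have hq0 : 0 < q := by positivity
  have hnp : L + 1 ≤ (n:ℝ) * p := by
    rw [hpdef, mul_div_cancel₀ _ (ne_of_gt hn0')]
    exact hKlb
  -- key: log n ≤ (L-3) q
  have hL3 : (0:ℝ) ≤ L - 3 := by linarith
  have h5 : (n:ℝ) * (8*L+12) ≤ (L-3) * ((n:ℝ) * Real.log n) := by
    have hin : (8*L+12:ℝ) ≤ (L-3) * Real.log n := by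
      have t1 : (L-3)*16 ≤ (L-3)*Real.log n :=
        mul_le_mul_of_nonneg_left hln16 (by linarith)
      linarith
    have t2 := mul_le_mul_of_nonneg_left hin hn0'.le
    nlinarith [t2]
  have h1sq : (L+1)^2 ≤ ((n:ℝ)*p)^2 :=
    pow_le_pow_left₀ (by linarith) hnp 2
  have ha : 4*(n:ℝ)*((L-3)*(L+1)) ≤ 4*(n:ℝ)*((L-3)*((n:ℝ)*p)) := by
    have t1 : (L-3)*(L+1) ≤ (L-3)*((n:ℝ)*p) := mul_le_mul_of_nonneg_left hnp hL3
    have := mul_le_mul_of_nonneg_left t1 (by positivity : (0:ℝ) ≤ 4*(n:ℝ))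
    linarith
  have hb : (L-3)*(L+1)^2 ≤ (L-3)*((n:ℝ)*p)^2 := mul_le_mul_of_nonneg_left h1sq hL3
  have hc : (L-3)*L^2 ≤ (L-3)*(L+1)^2 := by
    apply mul_le_mul_of_nonneg_left _ hL3
    nlinarith
  have hd : (L-3)*L^2 = (L-3)*((n:ℝ)*Real.log n) := by rw [hL2]
  have he : 4*(n:ℝ)*L^2 = 4*(n:ℝ)*((n:ℝ)*Real.log n) := by rw [hL2]
  have h6 : 4*(n:ℝ)^2*Real.log n ≤ (L-3) * (4*(n:ℝ)^2*p + (n:ℝ)^2*p^2) := by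
    linarith [ha, hb, hc, hd, he, h5, sq_nonneg p, sq_nonneg L]
  have hkey : Real.log n ≤ (L-3) * q := by
    have h7 : (L-3)*q*(4*(n:ℝ)^2) = (L-3) * (4*(n:ℝ)^2*p + (n:ℝ)^2*p^2) := by
      rw [hqdef]; ring
    have h8 : Real.log n * (4*(n:ℝ)^2) ≤ (L-3)*q*(4*(n:ℝ)^2) := by
      rw [h7]; linarith [h6]
    have h9 : (0:ℝ) < 4*(n:ℝ)^2 := by positivity
    exact le_of_mul_le_mul_right h8 h9
  set m := ⌊Real.log n / q⌋₊ + 1 with hmdef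
  have hmub : (m:ℝ) ≤ L - 2 := by
    have h1 : (⌊Real.log n / q⌋₊ : ℝ) ≤ Real.log n / q := Nat.floor_le (by positivity)
    have h2 : Real.log n / q ≤ L - 3 := (div_le_iff₀ hq0).mpr hkey
    push_cast [hmdef]; linarith
  have hmq : Real.log n < (m:ℝ) * q := by
    have h1 : Real.log n / q < (m:ℝ) := by
      push_cast [hmdef]
      linarith [Nat.lt_floor_add_one (Real.log n / q)]
    calc Real.log n = (Real.log n / q) * q := by field_simp
      _ < (m:ℝ) * q := by exact mul_lt_mul_of_pos_right h1 hq0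
  have hpowlt : (n:ℝ) * (1 - p)^m < 1 := by
    have h1p : 0 < 1 - p := by linarith
    have hlog : Real.log (1-p) ≤ -q := by
      rw [hqdef]; exact neg_log_one_sub hp0.le hp1
    have h2 : (1-p)^m = Real.exp ((m:ℝ) * Real.log (1-p)) := by
      rw [← Real.log_pow, Real.exp_log (pow_pos h1p m)]
    have h3 : (m:ℝ) * Real.log (1-p) < -Real.log n := by
      have h4 : (m:ℝ) * Real.log (1-p) ≤ (m:ℝ) * (-q) :=
        mul_le_mul_of_nonneg_left hlog (by positivity)
      linarith
    calc (n:ℝ)*(1-p)^m = (n:ℝ) * Real.exp ((m:ℝ) * Real.log (1-p)) := by rw [h2]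
      _ < (n:ℝ) * Real.exp (-Real.log n) :=
          mul_lt_mul_of_pos_left (Real.exp_lt_exp.mpr h3) hn0'
      _ = 1 := by rw [Real.exp_neg, Real.exp_log hn0']; field_simp
  -- use the combinatorial construction
  have hKn' : ((k+1:ℕ):ℝ) ≤ (n:ℝ) := by
    rw [hKdef] at hKn
    exact hKn.le
  have hpow' : (n:ℝ) * (1 - ((k+1:ℕ):ℝ)/(n:ℝ))^m < 1 := by
    rw [hpdef, hKdef] at hpowlt
    exact hpowlt
  obtain ⟨E, hnav, hcard⟩ := exists_navigable n hn0 X x D hinj hzero hpos k m hKn' hpow'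
  refine ⟨E, hnav, ?_⟩
  have hcR : (E.card : ℝ) ≤ (n:ℝ)*(k:ℝ) + (n:ℝ)*(m:ℝ) := by
    have : ((n*k + n*m : ℕ) : ℝ) = (n:ℝ)*(k:ℝ) + (n:ℝ)*(m:ℝ) := by push_cast; ring
    rw [← this]
    exact_mod_cast hcard
  have hk1 : (n:ℝ)*(k:ℝ) ≤ (n:ℝ)*(L+1) := mul_le_mul_of_nonneg_left hkL.le hn0'.le
  have hm1 : (n:ℝ)*(m:ℝ) ≤ (n:ℝ)*(L-2) := mul_le_mul_of_nonneg_left hmub hn0'.le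
  have hfin : (E.card : ℝ) ≤ 2 * ((n:ℝ) * L) := by
    have : (n:ℝ)*(L+1) + (n:ℝ)*(L-2) = 2*((n:ℝ)*L) - (n:ℝ) := by ring
    linarith
  have hsqrtmul : L = Real.sqrt n * Real.sqrt (Real.log n) := by
    rw [hLdef, Real.sqrt_mul hn0'.le]
  have hrpow : (n:ℝ)^((3:ℝ)/2) = (n:ℝ) * Real.sqrt n := by
    rw [show ((3:ℝ)/2) = 1 + 1/2 by norm_num, Real.rpow_add hn0', Real.rpow_one,
      ← Real.sqrt_eq_rpow]
  calc (E.card : ℝ) ≤ 2 * ((n:ℝ) * L) := hfin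
    _ = 2 * (n:ℝ)^((3:ℝ)/2) * Real.sqrt (Real.log n) := by
        rw [hsqrtmul, hrpow]; ring
end

section
/- For every n ≥ 2, every integer m with 1 ≤ m ≤ n, every family of n distinct points x_1, …, x_n in a type 𝒳 and every distance function D with D(x_i, x_i) = 0 for all i and D(x_i, x_j) > 0 whenever x_i ≠ x_j, there exists a navigable directed graph on {1, …, n} whose edge set E has at most (m − 1)·n + n·(⌊(n·ln n)/m⌋ + 1) edges. -/
open Finset

section Main

variable {n : ℕ} {X : Type} (x : Fin n → X) (D : X → X → ℝ)

/-- The strict "closer to `t`, ties toward smaller index" relation. -/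
def NavLt (t v s : Fin n) : Prop :=
  D (x t) (x v) < D (x t) (x s) ∨ (D (x t) (x v) = D (x t) (x s) ∧ v < s)

lemma navLt_trans {t a b c : Fin n} (h1 : NavLt x D t a b) (h2 : NavLt x D t b c) :
    NavLt x D t a c := by
  rcases h1 with h1 | ⟨h1, h1'⟩ <;> rcases h2 with h2 | ⟨h2, h2'⟩
  · exact Or.inl (lt_trans h1 h2)
  · exact Or.inl (h2 ▸ h1)
  · exact Or.inl (h1 ▸ h2)
  · exact Or.inr ⟨h1.trans h2, lt_trans h1' h2'⟩

lemma navLt_irrefl (t s : Fin n) : ¬ NavLt x D t s s := by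
  rintro (h | ⟨-, h⟩) <;> exact lt_irrefl _ h

lemma navLt_total {t s s' : Fin n} (h : s ≠ s') : NavLt x D t s s' ∨ NavLt x D t s' s := by
  rcases lt_trichotomy (D (x t) (x s)) (D (x t) (x s')) with h1 | h1 | h1
  · exact Or.inl (Or.inl h1)
  · rcases lt_or_gt_of_ne (show s ≠ s' from h) with h2 | h2
    · exact Or.inl (Or.inr ⟨h1, h2⟩)
    · exact Or.inr (Or.inr ⟨h1.symm, h2⟩)
  · exact Or.inr (Or.inl h1)

end Main

/-- Greedy hitting set. -/
lemma hitting_set {n m : ℕ} (hn : 0 < n) :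
    ∀ (k : ℕ) (F : Finset (Finset (Fin n))), (∀ A ∈ F, m ≤ A.card) →
      F.card * (n - m) ^ k < n ^ k →
      ∃ H : Finset (Fin n), H.card ≤ k ∧ ∀ A ∈ F, ∃ v ∈ H, v ∈ A := by
  intro k
  induction k with
  | zero =>
    intro F _ hcount
    simp only [pow_zero, mul_one, Nat.lt_one_iff, card_eq_zero] at hcount
    exact ⟨∅, le_refl 0, by simp [hcount]⟩
  | succ k ih =>
    intro F hsize hcount
    classical
    rcases F.eq_empty_or_nonempty with rfl | hFne
    · exact ⟨∅, by simp, by simp⟩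
    have hdouble : ∑ A ∈ F, A.card = ∑ v : Fin n, (F.filter (fun A => v ∈ A)).card := by
      have h1 : ∀ A : Finset (Fin n), A.card = ∑ v : Fin n, if v ∈ A then 1 else 0 := by
        intro A
        rw [← Finset.card_filter]
        congr 1
        exact (Finset.filter_univ_mem A).symm
      calc ∑ A ∈ F, A.card = ∑ A ∈ F, ∑ v : Fin n, if v ∈ A then 1 else 0 :=
            Finset.sum_congr rfl (fun A _ => h1 A)
        _ = ∑ v : Fin n, ∑ A ∈ F, if v ∈ A then 1 else 0 := Finset.sum_comm
        _ = ∑ v : Fin n, (F.filter (fun A => v ∈ A)).card :=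
            Finset.sum_congr rfl (fun v _ => (Finset.card_filter _ _).symm)
    have hsum : m * F.card ≤ ∑ A ∈ F, A.card := by
      calc m * F.card = ∑ _A ∈ F, m := by rw [Finset.sum_const, smul_eq_mul, mul_comm]
        _ ≤ ∑ A ∈ F, A.card := Finset.sum_le_sum hsize
    have hexists : ∃ v : Fin n, m * F.card ≤ n * (F.filter (fun A => v ∈ A)).card := by
      by_contra hcon
      push_neg at hcon
      have hne : (Finset.univ : Finset (Fin n)).Nonempty :=
        ⟨⟨0, hn⟩, Finset.mem_univ _⟩
      have hlt : ∑ v : Fin n, n * (F.filter (fun A => v ∈ A)).card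
          < ∑ _v : Fin n, m * F.card :=
        Finset.sum_lt_sum_of_nonempty hne (fun v _ => hcon v)
      rw [← Finset.mul_sum, ← hdouble, Finset.sum_const, Finset.card_univ, Fintype.card_fin,
        smul_eq_mul] at hlt
      have h2 : n * (m * F.card) ≤ n * (∑ A ∈ F, A.card) := Nat.mul_le_mul_left n hsum
      have h3 : n * (m * F.card) = m * F.card * n := by ring
      omega
    obtain ⟨v, hv⟩ := hexists
    set c := (F.filter (fun A => v ∈ A)).card with hc
    set F' := F.filter (fun A => v ∉ A) with hF'
    have hsplit : c + F'.card = F.card :=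
      Finset.card_filter_add_card_filter_not (fun A => v ∈ A)
    have hcF : c ≤ F.card := Finset.card_filter_le _ _
    have hcard' : n * F'.card ≤ (n - m) * F.card := by
      have h1 : n * F'.card = n * F.card - n * c := by
        rw [← hsplit]; rw [Nat.mul_add]; omega
      have h2 : n * F.card - n * c ≤ n * F.card - m * F.card :=
        Nat.sub_le_sub_left hv _
      have h3 : n * F.card - m * F.card = (n - m) * F.card := by
        rw [Nat.sub_mul]
      omega
    have hcount' : F'.card * (n - m) ^ k < n ^ k := by
      have h1 : n * (F'.card * (n - m) ^ k) ≤ (n - m) * F.card * (n - m) ^ k := by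
        rw [← mul_assoc]
        exact Nat.mul_le_mul_right _ hcard'
      have h2 : (n - m) * F.card * (n - m) ^ k = F.card * (n - m) ^ (k + 1) := by
        ring
      have h3 : n * (F'.card * (n - m) ^ k) < n * n ^ k := by
        calc n * (F'.card * (n - m) ^ k) ≤ F.card * (n - m) ^ (k + 1) := by omega
          _ < n ^ (k + 1) := hcount
          _ = n * n ^ k := by ring
      exact Nat.lt_of_mul_lt_mul_left h3
    obtain ⟨H', hH'card, hH'hit⟩ := ih F' (fun A hA => hsize A (Finset.mem_filter.mp hA).1) hcount'
    refine ⟨insert v H', ?_, ?_⟩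
    · calc (insert v H').card ≤ H'.card + 1 := Finset.card_insert_le _ _
        _ ≤ k + 1 := by omega
    · intro A hA
      by_cases hvA : v ∈ A
      · exact ⟨v, Finset.mem_insert_self _ _, hvA⟩
      · obtain ⟨w, hw, hwA⟩ := hH'hit A (Finset.mem_filter.mpr ⟨hA, hvA⟩)
        exact ⟨w, Finset.mem_insert_of_mem hw, hwA⟩

lemma key_numeric (n m : ℕ) (hn : 2 ≤ n) (hm1 : 1 ≤ m) (hmn : m ≤ n) :
    n * (n - m) ^ (⌊(n : ℝ) * Real.log n / (m : ℝ)⌋₊ + 1)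
      < n ^ (⌊(n : ℝ) * Real.log n / (m : ℝ)⌋₊ + 1) := by
  set k := ⌊(n : ℝ) * Real.log n / (m : ℝ)⌋₊ + 1 with hkdef
  have hn0 : 0 < n := by omega
  rcases eq_or_lt_of_le hmn with heq | hmlt
  · have h0 : n - m = 0 := by omega
    rw [h0, zero_pow (by omega : k ≠ 0), mul_zero]
    exact pow_pos hn0 k
  · have hNpos : (0:ℝ) < n := by exact_mod_cast hn0
    have hMpos : (0:ℝ) < m := by exact_mod_cast hm1
    set a : ℝ := ((n:ℝ) - m) / n with ha
    have ha0 : 0 ≤ a := by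
      apply div_nonneg _ (le_of_lt hNpos)
      have : (m:ℝ) ≤ n := by exact_mod_cast hmn
      linarith
    have haexp : a ≤ Real.exp (-(m / n)) := by
      have h := Real.add_one_le_exp (-( (m:ℝ) / n))
      have h2 : a = 1 - (m:ℝ)/n := by rw [ha, sub_div, div_self (ne_of_gt hNpos)]
      rw [h2]; linarith
    have hfl : (n:ℝ) * Real.log n / m < (k:ℝ) := by
      have h := Nat.lt_floor_add_one ((n:ℝ) * Real.log n / (m:ℝ))
      rw [hkdef]; push_cast; linarith
    have hkm : (n:ℝ) * Real.log n < (k:ℝ) * m := (div_lt_iff₀ hMpos).mp hfl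
    have hak : a ^ k < (n:ℝ)⁻¹ := by
      calc a ^ k ≤ Real.exp (-(m / n)) ^ k := pow_le_pow_left₀ ha0 haexp k
        _ = Real.exp ((k:ℝ) * (-(m / n))) := by rw [← Real.exp_nat_mul]
        _ < Real.exp (-Real.log n) := by
            apply Real.exp_lt_exp.mpr
            have hlog : Real.log n < (k:ℝ) * m / n := (lt_div_iff₀ hNpos).mpr (by nlinarith)
            have hre : (k:ℝ) * (-((m:ℝ)/n)) = -((k:ℝ)*m/n) := by ring
            rw [hre]; linarith
        _ = (n:ℝ)⁻¹ := by rw [Real.exp_neg, Real.exp_log hNpos]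
    have hfinal : (n:ℝ) * ((n:ℝ) - m) ^ k < (n:ℝ) ^ k := by
      have hnm : ((n:ℝ) - m) ^ k = a ^ k * (n:ℝ) ^ k := by
        rw [ha, div_pow, div_mul_cancel₀]
        exact pow_ne_zero k (ne_of_gt hNpos)
      rw [hnm]
      calc (n:ℝ) * (a ^ k * (n:ℝ) ^ k) < (n:ℝ) * ((n:ℝ)⁻¹ * (n:ℝ) ^ k) := by
            apply mul_lt_mul_of_pos_left _ hNpos
            exact mul_lt_mul_of_pos_right hak (pow_pos hNpos k)
        _ = (n:ℝ) ^ k := by field_simp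
    have hcast : ((n - m : ℕ) : ℝ) = (n:ℝ) - m := Nat.cast_sub hmn
    have hc2 : ((n * (n - m) ^ k : ℕ) : ℝ) < ((n ^ k : ℕ) : ℝ) := by
      push_cast [hcast]
      exact hfinal
    exact_mod_cast hc2

/-- The deterministic construction: for every `n ≥ 2` and `1 ≤ m ≤ n`, any `n`
distinct points admit a navigable graph with at most
`(m - 1)·n + n·(⌊(n·ln n)/m⌋ + 1)` edges. -/
theorem navigable_upper_bound_deterministic :
    ∀ n : ℕ, 2 ≤ n → ∀ m : ℕ, 1 ≤ m → m ≤ n →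
      ∀ (X : Type) (x : Fin n → X) (D : X → X → ℝ),
        Function.Injective x →
        (∀ i, D (x i) (x i) = 0) →
        (∀ i j, x i ≠ x j → 0 < D (x i) (x j)) →
        ∃ E : Finset (Fin n × Fin n), Navigable x D E ∧
          E.card ≤ (m - 1) * n + n * (⌊(n : ℝ) * Real.log n / (m : ℝ)⌋₊ + 1) := by
  intro n hn m hm1 hmn X x D hinj hzero hpos
  classical
  set k := ⌊(n : ℝ) * Real.log n / (m : ℝ)⌋₊ + 1 with hkdef
  have hn0 : 0 < n := by omega
  -- the "below" sets
  set below : Fin n → Fin n → Finset (Fin n) :=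
    fun t s => Finset.univ.filter (fun v => NavLt x D t v s) with hbelow
  have hmem_below : ∀ t s v, v ∈ below t s ↔ NavLt x D t v s := by
    intro t s v
    simp [hbelow]
  -- the target itself is below any other point
  have ht_below : ∀ t s : Fin n, s ≠ t → t ∈ below t s := by
    intro t s hst
    rw [hmem_below]
    left
    rw [hzero t]
    exact hpos t s (fun hxx => hst (hinj hxx.symm))
  -- card of below is strictly monotone along NavLt
  have hcard_mono : ∀ t s s' : Fin n, NavLt x D t s s' →
      (below t s).card < (below t s').card := by
    intro t s s' hlt
    apply Finset.card_lt_card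
    constructor
    · intro v hv
      rw [hmem_below] at *
      exact navLt_trans x D hv hlt
    · intro hsub
      have hs : s ∈ below t s' := (hmem_below t s' s).mpr hlt
      have := hsub hs
      rw [hmem_below] at this
      exact navLt_irrefl x D t s this
  have hcard_inj : ∀ t s s' : Fin n, s ≠ s' →
      (below t s).card ≠ (below t s').card := by
    intro t s s' hne
    rcases navLt_total x D (t := t) hne with h | h
    · exact ne_of_lt (hcard_mono t s s' h)
    · exact ne_of_gt (hcard_mono t s' s h)
  -- Type A edges: per target t, all s of rank < m point at t
  set Afun : Fin n → Finset (Fin n) :=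
    fun t => Finset.univ.filter (fun s => s ≠ t ∧ (below t s).card < m) with hAfun
  have hAcard : ∀ t, (Afun t).card ≤ m - 1 := by
    intro t
    have : (Afun t).card ≤ (Finset.Ico 1 m).card := by
      apply Finset.card_le_card_of_injOn (fun s => (below t s).card)
      · intro s hs
        simp only [hAfun, Finset.mem_coe, Finset.mem_filter, Finset.mem_univ, true_and] at hs
        rw [Finset.mem_coe, Finset.mem_Ico]
        refine ⟨?_, hs.2⟩
        have := ht_below t s hs.1
        exact Finset.card_pos.mpr ⟨t, this⟩
      · intro s hs s' hs' heq
        by_contra hne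
        exact hcard_inj t s s' hne heq
    rwa [Nat.card_Ico] at this
  set EA : Finset (Fin n × Fin n) :=
    Finset.univ.biUnion (fun t => (Afun t).image (fun s => (s, t))) with hEA
  have hEAcard : EA.card ≤ (m - 1) * n := by
    calc EA.card ≤ ∑ t : Fin n, ((Afun t).image (fun s => (s, t))).card :=
          Finset.card_biUnion_le
      _ ≤ ∑ _t : Fin n, (m - 1) := by
          apply Finset.sum_le_sum
          intro t _
          exact le_trans (Finset.card_image_le) (hAcard t)
      _ = (m - 1) * n := by
          rw [Finset.sum_const, Finset.card_univ, Fintype.card_fin, smul_eq_mul, mul_comm]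
  -- Type B edges: hitting sets
  have hHex : ∀ s : Fin n, ∃ H : Finset (Fin n), H.card ≤ k ∧
      ∀ t : Fin n, m ≤ (below t s).card → ∃ v ∈ H, v ∈ below t s := by
    intro s
    set F : Finset (Finset (Fin n)) :=
      (Finset.univ.filter (fun t => m ≤ (below t s).card)).image (fun t => below t s) with hF
    have hFsize : ∀ A ∈ F, m ≤ A.card := by
      intro A hA
      rw [hF, Finset.mem_image] at hA
      obtain ⟨t, ht, rfl⟩ := hA
      exact (Finset.mem_filter.mp ht).2
    have hFcard : F.card ≤ n := by
      calc F.card ≤ (Finset.univ.filter (fun t => m ≤ (below t s).card)).card :=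
            Finset.card_image_le
        _ ≤ (Finset.univ : Finset (Fin n)).card := Finset.card_filter_le _ _
        _ = n := by rw [Finset.card_univ, Fintype.card_fin]
    have hcount : F.card * (n - m) ^ k < n ^ k := by
      calc F.card * (n - m) ^ k ≤ n * (n - m) ^ k :=
            Nat.mul_le_mul_right _ hFcard
        _ < n ^ k := key_numeric n m hn hm1 hmn
    obtain ⟨H, hHc, hHh⟩ := hitting_set hn0 k F hFsize hcount
    refine ⟨H, hHc, ?_⟩
    intro t ht
    apply hHh
    rw [hF, Finset.mem_image]
    exact ⟨t, Finset.mem_filter.mpr ⟨Finset.mem_univ t, ht⟩, rfl⟩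
  choose H hHcard hHhit using hHex
  set EB : Finset (Fin n × Fin n) :=
    Finset.univ.biUnion (fun s => (H s).image (fun v => (s, v))) with hEB
  have hEBcard : EB.card ≤ n * k := by
    calc EB.card ≤ ∑ s : Fin n, ((H s).image (fun v => (s, v))).card :=
          Finset.card_biUnion_le
      _ ≤ ∑ _s : Fin n, k := by
          apply Finset.sum_le_sum
          intro s _
          exact le_trans (Finset.card_image_le) (hHcard s)
      _ = n * k := by
          rw [Finset.sum_const, Finset.card_univ, Fintype.card_fin, smul_eq_mul]
  refine ⟨EA ∪ EB, ?_, ?_⟩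
  · -- Navigability
    intro t s hst
    by_cases hrank : (below t s).card < m
    · refine ⟨t, ?_, ?_⟩
      · apply Finset.mem_union_left
        rw [hEA, Finset.mem_biUnion]
        refine ⟨t, Finset.mem_univ t, ?_⟩
        rw [Finset.mem_image]
        refine ⟨s, ?_, rfl⟩
        simp only [hAfun, Finset.mem_filter, Finset.mem_univ, true_and]
        exact ⟨hst, hrank⟩
      · left
        rw [hzero t]
        exact hpos t s (fun hxx => hst (hinj hxx.symm))
    · push_neg at hrank
      obtain ⟨v, hvH, hvb⟩ := hHhit s t hrank
      refine ⟨v, ?_, ?_⟩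
      · apply Finset.mem_union_right
        rw [hEB, Finset.mem_biUnion]
        refine ⟨s, Finset.mem_univ s, ?_⟩
        rw [Finset.mem_image]
        exact ⟨v, hvH, rfl⟩
      · rw [hmem_below] at hvb
        exact hvb
  · calc (EA ∪ EB).card ≤ EA.card + EB.card := Finset.card_union_le _ _
      _ ≤ (m - 1) * n + n * k := by omega
end

section
/- For all sufficiently large n, for every family of n distinct points x_1, …, x_n in a type 𝒳 and every distance function D with D(x_i, x_i) = 0 for all i and D(x_i, x_j) > 0 whenever x_i ≠ x_j, there exists a navigable directed graph on {1, …, n} with edge set E of size at most 2·n^{3/2}·√(ln n) that additionally satisfies the following two-step ('small world') property: for every target t and every s ≠ t, the set of out-neighbors of s is nonempty, and if h is the out-neighbor of s that minimizes D(x_t, x_h) (ties among out-neighbors broken toward the smaller index), then h = t or (h, t) ∈ E; consequently greedy routing from any s to any t terminates at t within at most 2 steps. -/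
open Finset

/-! ### Auxiliary lemmas -/

/-- Key for greedy routing toward `t`: distance with ties broken by index. -/
def navKey {n : ℕ} {X : Type*} (x : Fin n → X) (D : X → X → ℝ) (t v : Fin n) :
    ℝ ×ₗ Fin n := toLex (D (x t) (x v), v)

lemma navKey_lt_iff {n : ℕ} {X : Type*} (x : Fin n → X) (D : X → X → ℝ) (t u v : Fin n) :
    navKey x D t u < navKey x D t v ↔
      (D (x t) (x u) < D (x t) (x v) ∨ (D (x t) (x u) = D (x t) (x v) ∧ u < v)) := by
  simpa [navKey] using (Prod.Lex.lt_iff : toLex (D (x t) (x u), u) < toLex (D (x t) (x v), v) ↔ _)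

lemma navKey_le_iff {n : ℕ} {X : Type*} (x : Fin n → X) (D : X → X → ℝ) (t u v : Fin n) :
    navKey x D t u ≤ navKey x D t v ↔
      (D (x t) (x u) < D (x t) (x v) ∨ (D (x t) (x u) = D (x t) (x v) ∧ u ≤ v)) := by
  simpa [navKey] using (Prod.Lex.le_iff : toLex (D (x t) (x u), u) ≤ toLex (D (x t) (x v), v) ↔ _)

lemma descFactorial_mul_pow_le (r a b : ℕ) (hab : a ≤ b) :
    a.descFactorial r * b ^ r ≤ a ^ r * b.descFactorial r := by
  induction r with
  | zero => simp
  | succ r ih =>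
    have key : (a - r) * b ≤ a * (b - r) := by
      rcases Nat.le_total a r with h | h
      · simp [Nat.sub_eq_zero_of_le h]
      · have h1 : r ≤ b := h.trans hab
        zify [h, h1]
        nlinarith
    calc a.descFactorial (r + 1) * b ^ (r + 1)
        = ((a - r) * b) * (a.descFactorial r * b ^ r) := by
          rw [Nat.descFactorial_succ, pow_succ]; ring
      _ ≤ (a * (b - r)) * (a ^ r * b.descFactorial r) := Nat.mul_le_mul key ih
      _ = a ^ (r + 1) * b.descFactorial (r + 1) := by
          rw [Nat.descFactorial_succ, pow_succ]; ring

lemma choose_num_ineq (n m r : ℕ) (hn : 0 < n) (hm : m ≤ n) (hr : r ≤ n)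
    (h : (n : ℝ) * Real.log n < (m : ℝ) * r) :
    n * (n - m).choose r < n.choose r := by
  have hn' : (0 : ℝ) < n := by exact_mod_cast hn
  have hmn' : (m : ℝ) ≤ n := by exact_mod_cast hm
  have hx0 : (0 : ℝ) ≤ 1 - (m : ℝ) / n := by
    rw [sub_nonneg, div_le_one hn']; exact hmn'
  have h1 : (1 - (m : ℝ) / n) ≤ Real.exp (-((m : ℝ) / n)) := by
    have := Real.add_one_le_exp (-((m : ℝ) / n)); linarith
  have h2 : (1 - (m : ℝ) / n) ^ r ≤ Real.exp (-((m : ℝ) / n)) ^ r :=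
    pow_le_pow_left₀ hx0 h1 r
  have h3 : Real.exp (-((m : ℝ) / n)) ^ r = Real.exp (-((m : ℝ) * r / n)) := by
    rw [← Real.exp_nat_mul]; ring_nf
  have h4 : Real.exp (-((m : ℝ) * r / n)) < Real.exp (-Real.log n) := by
    apply Real.exp_lt_exp.2
    rw [neg_lt_neg_iff, lt_div_iff₀ hn']
    linarith
  have h5 : Real.exp (-Real.log n) = 1 / n := by
    rw [Real.exp_neg, Real.exp_log hn', one_div]
  have hnm : ((n - m : ℕ) : ℝ) = (n : ℝ) * (1 - (m : ℝ) / n) := by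
    rw [Nat.cast_sub hm]; field_simp
  have key : (n : ℝ) * ((n - m : ℕ) : ℝ) ^ r < (n : ℝ) ^ r := by
    rw [hnm, mul_pow]
    have hnr : (0 : ℝ) < (n : ℝ) ^ r := by positivity
    calc (n : ℝ) * ((n : ℝ) ^ r * (1 - (m : ℝ) / n) ^ r)
        ≤ (n : ℝ) * ((n : ℝ) ^ r * Real.exp (-((m : ℝ) * r / n))) := by
          have := h2.trans (le_of_eq h3)
          exact mul_le_mul_of_nonneg_left
            (mul_le_mul_of_nonneg_left this (le_of_lt hnr)) (le_of_lt hn')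
      _ < (n : ℝ) * ((n : ℝ) ^ r * (1 / n)) := by
          have := h4.trans_eq h5
          exact mul_lt_mul_of_pos_left (mul_lt_mul_of_pos_left this hnr) hn'
      _ = (n : ℝ) ^ r := by field_simp
  have keyN : n * (n - m) ^ r < n ^ r := by exact_mod_cast key
  have hd := descFactorial_mul_pow_le r (n - m) n (Nat.sub_le n m)
  have hpos : 0 < n.descFactorial r := by
    rw [Nat.descFactorial_eq_factorial_mul_choose]
    exact Nat.mul_pos (Nat.factorial_pos r) (Nat.choose_pos hr)
  have step : (n * (n - m).descFactorial r) * n ^ r < n.descFactorial r * n ^ r := by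
    calc (n * (n - m).descFactorial r) * n ^ r
        = n * ((n - m).descFactorial r * n ^ r) := by ring
      _ ≤ n * ((n - m) ^ r * n.descFactorial r) := Nat.mul_le_mul_left _ hd
      _ = (n * (n - m) ^ r) * n.descFactorial r := by ring
      _ < n ^ r * n.descFactorial r := by
          exact Nat.mul_lt_mul_of_lt_of_le keyN (le_refl _) hpos
      _ = n.descFactorial r * n ^ r := by ring
  have step2 : n * (n - m).descFactorial r < n.descFactorial r :=
    lt_of_mul_lt_mul_right step (Nat.zero_le _)
  rw [Nat.descFactorial_eq_factorial_mul_choose, Nat.descFactorial_eq_factorial_mul_choose]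
    at step2
  have step3 : r.factorial * (n * (n - m).choose r) < r.factorial * n.choose r := by
    calc r.factorial * (n * (n - m).choose r) = n * (r.factorial * (n - m).choose r) := by ring
      _ < r.factorial * n.choose r := step2
  exact lt_of_mul_lt_mul_left step3 (Nat.zero_le _)

lemma exists_hitting {n m r : ℕ} (A : Fin n → Finset (Fin n)) (hA : ∀ t, m ≤ (A t).card)
    (hnum : n * (n - m).choose r < n.choose r) :
    ∃ R : Finset (Fin n), R.card = r ∧ ∀ t, ∃ a, a ∈ A t ∧ a ∈ R := by
  classical
  set P := Finset.powersetCard r (univ : Finset (Fin n)) with hP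
  set Bad := (univ : Finset (Fin n)).biUnion (fun t => Finset.powersetCard r (A t)ᶜ) with hBad
  have hcardP : P.card = n.choose r := by simp [hP]
  have hcardBad : Bad.card ≤ n * (n - m).choose r := by
    refine Finset.card_biUnion_le.trans ?_
    have hb : ∀ t ∈ (univ : Finset (Fin n)),
        (Finset.powersetCard r (A t)ᶜ).card ≤ (n - m).choose r := by
      intro t _
      rw [Finset.card_powersetCard]
      apply Nat.choose_le_choose
      rw [Finset.card_compl, Fintype.card_fin]
      exact Nat.sub_le_sub_left (hA t) n
    calc ∑ t ∈ (univ : Finset (Fin n)), (Finset.powersetCard r (A t)ᶜ).card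
        ≤ ∑ _t ∈ (univ : Finset (Fin n)), (n - m).choose r := Finset.sum_le_sum hb
      _ = n * (n - m).choose r := by
          rw [Finset.sum_const, Finset.card_univ, Fintype.card_fin, smul_eq_mul]
  have hne : ∃ R ∈ P, R ∉ Bad := by
    by_contra hc
    push_neg at hc
    have := Finset.card_le_card (fun R hR => hc R hR)
    omega
  obtain ⟨R, hRP, hRB⟩ := hne
  rw [Finset.mem_powersetCard] at hRP
  refine ⟨R, hRP.2, fun t => ?_⟩
  by_contra hc
  push_neg at hc
  apply hRB
  refine Finset.mem_biUnion.2 ⟨t, Finset.mem_univ t, Finset.mem_powersetCard.2 ⟨?_, hRP.2⟩⟩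
  intro a ha
  exact Finset.mem_compl.2 (fun hmem => hc a hmem ha)

lemma exists_initial_segment {n : ℕ} {K : Type*} [LinearOrder K] (key : Fin n → K)
    (hinj : Function.Injective key) (m : ℕ) (hm : m ≤ n) :
    ∃ A : Finset (Fin n), A.card = m ∧ ∀ a ∈ A, ∀ b ∉ A, key a < key b := by
  induction m with
  | zero => exact ⟨∅, by simp, by simp⟩
  | succ m ih =>
    obtain ⟨A, hAcard, hAlt⟩ := ih (Nat.le_of_succ_le hm)
    have hne : ((univ : Finset (Fin n)) \ A).Nonempty := by
      rw [Finset.sdiff_nonempty]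
      intro hsub
      have := Finset.card_le_card hsub
      rw [Finset.card_univ, Fintype.card_fin, hAcard] at this
      omega
    obtain ⟨b₀, hb₀mem, hb₀min⟩ := Finset.exists_min_image _ key hne
    have hb₀A : b₀ ∉ A := (Finset.mem_sdiff.1 hb₀mem).2
    refine ⟨insert b₀ A, ?_, ?_⟩
    · rw [Finset.card_insert_of_notMem hb₀A, hAcard]
    · intro a ha b hb
      have hbA : b ∉ A := fun h => hb (Finset.mem_insert_of_mem h)
      rcases Finset.mem_insert.1 ha with rfl | haA
      · have hle := hb₀min b (Finset.mem_sdiff.2 ⟨Finset.mem_univ b, hbA⟩)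
        exact lt_of_le_of_ne hle (fun h => hb (hinj h ▸ Finset.mem_insert_self a A))
      · exact hAlt a haA b hbA

/-- Two-step ("small world") property: for every target `t` and start `s ≠ t`,
`s` has an out-neighbor; moreover the out-neighbor `h` minimizing the distance to
`x t` (ties among neighbors broken toward the smaller index) satisfies `h = t` or
`(h, t) ∈ E`, so greedy routing reaches `t` in at most two steps. -/
def TwoStep {n : ℕ} {X : Type*} (x : Fin n → X) (D : X → X → ℝ)
    (E : Finset (Fin n × Fin n)) : Prop :=
  ∀ t s : Fin n, s ≠ t → ∃ h : Fin n, (s, h) ∈ E ∧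
    (∀ v : Fin n, (s, v) ∈ E →
      (D (x t) (x h) < D (x t) (x v) ∨ (D (x t) (x h) = D (x t) (x v) ∧ h ≤ v))) ∧
    (h = t ∨ (h, t) ∈ E)

lemma construction {n : ℕ} (X : Type) (x : Fin n → X) (D : X → X → ℝ)
    (hxI : Function.Injective x) (hD0 : ∀ i, D (x i) (x i) = 0)
    (hDpos : ∀ i j, x i ≠ x j → 0 < D (x i) (x j))
    (m : ℕ) (hm1 : 1 ≤ m) (hmn : m ≤ n)
    (hnum : n * (n - m).choose m < n.choose m) :
    ∃ E : Finset (Fin n × Fin n), Navigable x D E ∧ TwoStep x D E ∧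
      E.card ≤ n * m + (n - m) * m := by
  classical
  have keyinj : ∀ t : Fin n, Function.Injective (navKey x D t) := by
    intro t u v h
    simpa [navKey] using congrArg (fun p => (ofLex p).2) h
  have keymin : ∀ t v : Fin n, v ≠ t → navKey x D t t < navKey x D t v := by
    intro t v hv
    rw [navKey_lt_iff]
    left
    rw [hD0 t]
    exact hDpos t v (fun h => hv ((hxI h).symm))
  have hAex : ∀ t : Fin n, ∃ A : Finset (Fin n), A.card = m ∧
      ∀ a ∈ A, ∀ b ∉ A, navKey x D t a < navKey x D t b :=
    fun t => exists_initial_segment (navKey x D t) (keyinj t) m hmn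
  choose A hAcard hAlt using hAex
  have htA : ∀ t : Fin n, t ∈ A t := by
    intro t
    by_contra ht
    have hne : (A t).Nonempty := Finset.card_pos.1 (by rw [hAcard]; omega)
    obtain ⟨a, haA⟩ := hne
    have hat : a ≠ t := fun h => ht (h ▸ haA)
    exact absurd (hAlt t a haA t ht) (not_lt.2 (le_of_lt (keymin t a hat)))
  obtain ⟨R, hRcard, hRhit⟩ :=
    exists_hitting A (fun t => le_of_eq (hAcard t).symm) hnum
  set B : Finset (Fin n × Fin n) :=
    (univ : Finset (Fin n)).biUnion (fun t => ((A t).erase t).image (fun a => (a, t))) with hB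
  set E := ((univ : Finset (Fin n)) ×ˢ R) ∪ B with hE
  have hmemB : ∀ a t : Fin n, a ∈ A t → a ≠ t → (a, t) ∈ E := by
    intro a t haA hat
    exact Finset.mem_union_right _ (Finset.mem_biUnion.2
      ⟨t, Finset.mem_univ t, Finset.mem_image.2 ⟨a, Finset.mem_erase.2 ⟨hat, haA⟩, rfl⟩⟩)
  have hmemR : ∀ s v : Fin n, v ∈ R → (s, v) ∈ E := by
    intro s v hv
    exact Finset.mem_union_left _ (Finset.mem_product.2 ⟨Finset.mem_univ s, hv⟩)
  have hwit : ∀ t s : Fin n, s ≠ t →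
      ∃ v : Fin n, (s, v) ∈ E ∧ v ∈ A t ∧ navKey x D t v < navKey x D t s := by
    intro t s hst
    by_cases hs : s ∈ A t
    · exact ⟨t, hmemB s t hs hst, htA t, keymin t s hst⟩
    · obtain ⟨a, haA, haR⟩ := hRhit t
      exact ⟨a, hmemR s a haR, haA, hAlt t a haA s hs⟩
  refine ⟨E, ?_, ?_, ?_⟩
  · intro t s hst
    obtain ⟨v, hvE, _, hvlt⟩ := hwit t s hst
    exact ⟨v, hvE, (navKey_lt_iff x D t v s).1 hvlt⟩
  · intro t s hst
    obtain ⟨v₀, hv₀E, hv₀A, _⟩ := hwit t s hst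
    have hSne : ((univ : Finset (Fin n)).filter (fun v => (s, v) ∈ E)).Nonempty :=
      ⟨v₀, Finset.mem_filter.2 ⟨Finset.mem_univ _, hv₀E⟩⟩
    obtain ⟨h, hhS, hhmin⟩ := Finset.exists_min_image _ (navKey x D t) hSne
    have hhE : (s, h) ∈ E := (Finset.mem_filter.1 hhS).2
    have hhA : h ∈ A t := by
      by_contra hh
      have h1 := hAlt t v₀ hv₀A h hh
      have h2 := hhmin v₀ (Finset.mem_filter.2 ⟨Finset.mem_univ _, hv₀E⟩)
      exact absurd h1 (not_lt.2 h2)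
    refine ⟨h, hhE, ?_, ?_⟩
    · intro v hvE
      exact (navKey_le_iff x D t h v).1
        (hhmin v (Finset.mem_filter.2 ⟨Finset.mem_univ _, hvE⟩))
    · by_cases hht : h = t
      · exact Or.inl hht
      · exact Or.inr (hmemB h t hhA hht)
  · have hEsub : E ⊆ ((univ : Finset (Fin n)) ×ˢ R) ∪
        (Rᶜ.biUnion (fun t => ((A t).erase t).image (fun a => (a, t)))) := by
      intro p hp
      rcases Finset.mem_union.1 hp with hp | hp
      · exact Finset.mem_union_left _ hp
      · obtain ⟨t, _, hpt⟩ := Finset.mem_biUnion.1 hp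
        obtain ⟨a, haA, rfl⟩ := Finset.mem_image.1 hpt
        by_cases htR : t ∈ R
        · exact Finset.mem_union_left _ (Finset.mem_product.2 ⟨Finset.mem_univ _, htR⟩)
        · exact Finset.mem_union_right _ (Finset.mem_biUnion.2
            ⟨t, Finset.mem_compl.2 htR, Finset.mem_image.2 ⟨a, haA, rfl⟩⟩)
    have h1 : ((univ : Finset (Fin n)) ×ˢ R).card = n * m := by
      rw [Finset.card_product, Finset.card_univ, Fintype.card_fin, hRcard]
    have h2 : (Rᶜ.biUnion (fun t => ((A t).erase t).image (fun a => (a, t)))).card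
        ≤ (n - m) * m := by
      refine Finset.card_biUnion_le.trans ?_
      have hb : ∀ t ∈ Rᶜ, (((A t).erase t).image (fun a => (a, t))).card ≤ m := by
        intro t _
        exact Finset.card_image_le.trans
          ((Finset.card_le_card (Finset.erase_subset _ _)).trans (le_of_eq (hAcard t)))
      calc ∑ t ∈ Rᶜ, (((A t).erase t).image (fun a => (a, t))).card
          ≤ ∑ _t ∈ Rᶜ, m := Finset.sum_le_sum hb
        _ = Rᶜ.card * m := by rw [Finset.sum_const, smul_eq_mul]
        _ = (n - m) * m := by rw [Finset.card_compl, Fintype.card_fin, hRcard]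
    calc E.card ≤ _ := Finset.card_le_card hEsub
      _ ≤ ((univ : Finset (Fin n)) ×ˢ R).card
          + (Rᶜ.biUnion (fun t => ((A t).erase t).image (fun a => (a, t)))).card :=
            Finset.card_union_le _ _
      _ ≤ n * m + (n - m) * m := by omega



/-- For all sufficiently large `n`, any `n` distinct points admit a navigable graph
with at most `2 n^{3/2} √(ln n)` edges for which greedy routing always succeeds in
at most two steps. -/
theorem navigable_upper_bound_small_world :
    ∃ N : ℕ, ∀ n : ℕ, N ≤ n →
      ∀ (X : Type) (x : Fin n → X) (D : X → X → ℝ),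
        Function.Injective x →
        (∀ i, D (x i) (x i) = 0) →
        (∀ i j, x i ≠ x j → 0 < D (x i) (x j)) →
        ∃ E : Finset (Fin n × Fin n), Navigable x D E ∧ TwoStep x D E ∧
          (E.card : ℝ) ≤ 2 * (n : ℝ) ^ ((3 : ℝ) / 2) * Real.sqrt (Real.log n) := by
  refine ⟨256, fun n hn X x D hxI hD0 hDpos => ?_⟩
  have hn256 : (256 : ℝ) ≤ (n : ℝ) := by exact_mod_cast hn
  have hn0 : (0 : ℝ) < n := by linarith
  set L := Real.sqrt ((n : ℝ) * Real.log n) with hL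
  have hlogpos : 0 ≤ Real.log n := Real.log_nonneg (by linarith)
  have hL0 : 0 ≤ L := Real.sqrt_nonneg _
  have hL2 : L ^ 2 = (n : ℝ) * Real.log n := Real.sq_sqrt (by positivity)
  set q := ⌈L⌉₊ with hq
  set m := q + 1 with hm
  have hlog4 : (4 : ℝ) ≤ Real.log n := by
    rw [Real.le_log_iff_exp_le hn0]
    calc Real.exp 4 = Real.exp 1 ^ (4 : ℕ) := by
          rw [← Real.exp_nat_mul]; norm_num
      _ ≤ 2.7182818286 ^ (4 : ℕ) := by
          exact pow_le_pow_left₀ (Real.exp_pos 1).le (le_of_lt Real.exp_one_lt_d9) 4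
      _ ≤ 256 := by norm_num
      _ ≤ (n : ℝ) := hn256
  have hlogle : Real.log n ≤ 2 * Real.sqrt n := by
    have h1 : Real.log (Real.sqrt n) ≤ Real.sqrt n - 1 :=
      Real.log_le_sub_one_of_pos (Real.sqrt_pos.2 hn0)
    rw [Real.log_sqrt (le_of_lt hn0)] at h1
    linarith
  have hsq : Real.sqrt n ≤ (n : ℝ) / 4 := by
    calc Real.sqrt n ≤ Real.sqrt (((n : ℝ) / 4) ^ 2) := Real.sqrt_le_sqrt (by nlinarith)
      _ = (n : ℝ) / 4 := Real.sqrt_sq (by positivity)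
  have hLle : L ≤ (n : ℝ) - 2 := by
    have h2 : (n : ℝ) * Real.log n ≤ ((n : ℝ) - 2) ^ 2 := by nlinarith
    calc L ≤ Real.sqrt (((n : ℝ) - 2) ^ 2) := Real.sqrt_le_sqrt h2
      _ = (n : ℝ) - 2 := Real.sqrt_sq (by linarith)
  have hqn : q ≤ n - 2 := by
    apply Nat.ceil_le.2
    rw [Nat.cast_sub (by omega : 2 ≤ n)]
    exact_mod_cast hLle
  have hmn : m ≤ n := by omega
  have hqL : L ≤ (q : ℝ) := Nat.le_ceil L
  have hnum_r : (n : ℝ) * Real.log n < (m : ℝ) * (m : ℕ) := by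
    have hLm : L < (m : ℝ) := by
      have : (q : ℝ) < (m : ℝ) := by exact_mod_cast Nat.lt_succ_self q
      linarith
    nlinarith
  have hnum := choose_num_ineq n m m (by omega) hmn hmn hnum_r
  obtain ⟨E, hNav, hTwo, hcard⟩ := construction X x D hxI hD0 hDpos m (by omega) hmn hnum
  have hmn' : (m : ℝ) ≤ (n : ℝ) := by exact_mod_cast hmn
  have hcardR : (E.card : ℝ) ≤ (m : ℝ) * (2 * (n : ℝ) - m) := by
    have h1 : ((n * m + (n - m) * m : ℕ) : ℝ) = (m : ℝ) * (2 * (n : ℝ) - m) := by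
      push_cast [Nat.cast_sub hmn]; ring
    calc (E.card : ℝ) ≤ ((n * m + (n - m) * m : ℕ) : ℝ) := by exact_mod_cast hcard
      _ = _ := h1
  have hmL : (m : ℝ) ≤ L + 2 := by
    have h1 : (q : ℝ) < L + 1 := Nat.ceil_lt_add_one hL0
    have h2 : (m : ℝ) = (q : ℝ) + 1 := by exact_mod_cast rfl
    linarith
  have hLm : L ≤ (m : ℝ) := by
    have h2 : (m : ℝ) = (q : ℝ) + 1 := by exact_mod_cast rfl
    linarith
  have hmain : (m : ℝ) * (2 * (n : ℝ) - m) ≤ 2 * (n : ℝ) * L := by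
    have h4n : 4 * (n : ℝ) ≤ L ^ 2 := by nlinarith
    have step1 : (m : ℝ) * (2 * (n : ℝ) - m) ≤ (L + 2) * (2 * (n : ℝ) - L) := by
      apply mul_le_mul hmL (by linarith) (by linarith) (by linarith)
    nlinarith
  have hfin : 2 * (n : ℝ) * L = 2 * (n : ℝ) ^ ((3 : ℝ) / 2) * Real.sqrt (Real.log n) := by
    rw [hL, Real.sqrt_mul (le_of_lt hn0)]
    have h3 : (n : ℝ) ^ ((3 : ℝ) / 2) = (n : ℝ) * Real.sqrt n := by
      rw [show ((3 : ℝ) / 2) = 1 + 1 / 2 by norm_num, Real.rpow_add hn0, Real.rpow_one,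
        ← Real.sqrt_eq_rpow]
    rw [h3]; ring
  rw [← hfin]
  exact ⟨E, hNav, hTwo, hcardR.trans hmain⟩
end

section
/- Let n ≥ 2, let m be an integer with 1 ≤ m ≤ n, let r = ⌈3·n·ln n / m⌉, and let T_1, …, T_n ⊆ {1, …, n} be subsets with |T_j| ≥ m for every j. Let (Y_{i,k}) for i ∈ {1, …, n}, k ∈ {1, …, r} be i.i.d. random variables, each uniformly distributed on {1, …, n}. Then with probability at least 1 − 1/n, for every pair (i, j) ∈ {1, …, n} × {1, …, n} there exists k ∈ {1, …, r} with Y_{i,k} ∈ T_j. -/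
open MeasureTheory

lemma card_hit (n r : ℕ) (i : Fin n) (S : Finset (Fin n)) :
    Fintype.card {Y : Fin n → Fin r → Fin n // ∀ k, Y i k ∈ S}
      = S.card ^ r * (n ^ r) ^ (n - 1) := by
  have e1 : {Y : Fin n → Fin r → Fin n // ∀ k, Y i k ∈ S} ≃
      {p : (Fin r → Fin n) × ({j : Fin n // j ≠ i} → Fin r → Fin n) // ∀ k, p.1 k ∈ S} :=
    (Equiv.funSplitAt i (Fin r → Fin n)).subtypeEquiv (fun Y => Iff.rfl)
  have e2 : {p : (Fin r → Fin n) × ({j : Fin n // j ≠ i} → Fin r → Fin n) // ∀ k, p.1 k ∈ S} ≃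
      {f : Fin r → Fin n // ∀ k, f k ∈ S} × ({j : Fin n // j ≠ i} → Fin r → Fin n) :=
    Equiv.prodSubtypeFstEquivSubtypeProd (p := fun f : Fin r → Fin n => ∀ k, f k ∈ S)
  have e3 : {f : Fin r → Fin n // ∀ k, f k ∈ S} ≃ (Fin r → {x : Fin n // x ∈ S}) :=
    Equiv.subtypePiEquivPi
  rw [Fintype.card_congr (e1.trans e2), Fintype.card_prod, Fintype.card_congr e3,
    Fintype.card_fun, Fintype.card_fun, Fintype.card_fun]
  have h1 : Fintype.card {x : Fin n // x ∈ S} = S.card := Fintype.card_coe S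
  have h2 : Fintype.card {j : Fin n // j ≠ i} = n - 1 := by
    rw [Fintype.card_subtype_compl, Fintype.card_subtype_eq, Fintype.card_fin]
  rw [h1, h2]; simp [Fintype.card_fin]

lemma key_real (n m r : ℕ) (hn : 2 ≤ n) (hm1 : 1 ≤ m) (hmn : m ≤ n)
    (hr : 3 * (n : ℝ) * Real.log n / m ≤ r) :
    (n : ℝ) ^ 3 * ((n - m : ℕ) : ℝ) ^ r ≤ (n : ℝ) ^ r := by
  have hn0 : (0:ℝ) < n := by positivity
  have hm0 : (0:ℝ) < m := by exact_mod_cast hm1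
  have hcast : ((n - m : ℕ) : ℝ) = (n : ℝ) - m := by
    push_cast [hmn]; ring
  have hnm0 : (0:ℝ) ≤ (n:ℝ) - m := by
    rw [← hcast]; positivity
  have h1 : (n:ℝ) - m ≤ n * Real.exp (-(m / n)) := by
    have := Real.add_one_le_exp (-(m / n : ℝ))
    have h2 : (n:ℝ) * (-(m/n) + 1) ≤ n * Real.exp (-(m/n)) :=
      mul_le_mul_of_nonneg_left this hn0.le
    calc (n:ℝ) - m = n * (-(m/n) + 1) := by field_simp; ring
      _ ≤ _ := h2
  have hpow : ((n - m : ℕ) : ℝ) ^ r ≤ (n:ℝ) ^ r * Real.exp (-(m / n)) ^ r := by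
    rw [hcast, ← mul_pow]
    exact pow_le_pow_left₀ hnm0 h1 r
  have hexp : Real.exp (-(m / n : ℝ)) ^ r = Real.exp (-(m * r / n)) := by
    rw [← Real.exp_nat_mul]; ring_nf
  have hlog : 3 * Real.log n ≤ (m : ℝ) * r / n := by
    rw [div_le_iff₀ hm0] at hr
    rw [le_div_iff₀ hn0]
    nlinarith [hr]
  have h3 : Real.exp (-((m:ℝ) * r / n)) ≤ ((n:ℝ) ^ 3)⁻¹ := by
    have : ((n:ℝ) ^ 3)⁻¹ = Real.exp (-(3 * Real.log n)) := by
      rw [Real.exp_neg]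
      congr 1
      have h4 : (3:ℝ) * Real.log n = Real.log ((n:ℝ)^3) := by
        rw [Real.log_pow]; norm_num
      rw [h4, Real.exp_log (by positivity)]
    rw [this]
    exact Real.exp_le_exp.mpr (by linarith)
  calc (n:ℝ)^3 * ((n - m : ℕ):ℝ)^r ≤ (n:ℝ)^3 * ((n:ℝ)^r * Real.exp (-((m:ℝ) * r / n))) := by
        rw [← hexp]; exact mul_le_mul_of_nonneg_left hpow (by positivity)
    _ ≤ (n:ℝ)^3 * ((n:ℝ)^r * ((n:ℝ)^3)⁻¹) := by gcongr
    _ = (n:ℝ)^r := by field_simp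

/-- Probabilistic hitting lemma: if every node `i ∈ {1, …, n}` draws
`r = ⌈3 n ln n / m⌉` independent uniform random out-neighbors `Y i k`, then with
probability at least `1 - 1/n` every node's random draws hit every one of the `n`
given sets `T j` of size at least `m`. -/
theorem random_out_neighbors_hit (n m : ℕ) (hn : 2 ≤ n) (hm1 : 1 ≤ m) (hmn : m ≤ n)
    (r : ℕ) (hr : r = ⌈3 * (n : ℝ) * Real.log n / (m : ℝ)⌉₊)
    (T : Fin n → Finset (Fin n)) (hT : ∀ j, m ≤ (T j).card) :
    (1 : ENNReal) - 1 / (n : ENNReal) ≤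
      (@PMF.uniformOfFintype (Fin n → Fin r → Fin n) _
          ⟨fun _ _ => ⟨0, by omega⟩⟩).toMeasure
        {Y | ∀ i j : Fin n, ∃ k : Fin r, Y i k ∈ T j} := by
  have hn0 : 0 < n := by omega
  have hr1 : 3 * (n:ℝ) * Real.log n / m ≤ r := hr ▸ Nat.le_ceil _
  -- the key counting inequality, as naturals
  have keyN : n ^ 3 * ((n - m) ^ r * (n ^ r) ^ (n - 1)) ≤ (n ^ r) ^ n := by
    have h := key_real n m r hn hm1 hmn hr1
    have h1 : n ^ 3 * (n - m) ^ r ≤ n ^ r := by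
      have : ((n ^ 3 * (n - m) ^ r : ℕ) : ℝ) ≤ ((n ^ r : ℕ) : ℝ) := by push_cast; exact h
      exact_mod_cast this
    calc n ^ 3 * ((n - m) ^ r * (n ^ r) ^ (n - 1))
        = (n ^ 3 * (n - m) ^ r) * (n ^ r) ^ (n - 1) := by ring
      _ ≤ n ^ r * (n ^ r) ^ (n - 1) := Nat.mul_le_mul_right _ h1
      _ = (n ^ r) ^ (n - 1 + 1) := (pow_succ' _ _).symm
      _ = (n ^ r) ^ n := by congr 1; omega
  haveI hne : Nonempty (Fin n → Fin r → Fin n) := ⟨fun _ _ => ⟨0, by omega⟩⟩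
  have hmeas : ∀ s : Set (Fin n → Fin r → Fin n), MeasurableSet s :=
    fun s => s.to_countable.measurableSet
  set p := (@PMF.uniformOfFintype (Fin n → Fin r → Fin n) _
      ⟨fun _ _ => ⟨0, by omega⟩⟩) with hp
  set G := {Y : Fin n → Fin r → Fin n | ∀ i j : Fin n, ∃ k : Fin r, Y i k ∈ T j} with hG
  set N : ℕ := (n - m) ^ r * (n ^ r) ^ (n - 1) with hN
  set D : ℕ := (n ^ r) ^ n with hD
  set E : Fin n → Fin n → Set (Fin n → Fin r → Fin n) :=
    fun i j => {Y | ∀ k, Y i k ∈ (T j)ᶜ} with hEdef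
  have hcompl : Gᶜ ⊆ ⋃ i, ⋃ j, E i j := by
    intro Y hY
    simp only [hG, Set.mem_compl_iff, Set.mem_setOf_eq, not_forall, not_exists] at hY
    obtain ⟨i, j, hij⟩ := hY
    exact Set.mem_iUnion.2 ⟨i, Set.mem_iUnion.2 ⟨j, fun k => Finset.mem_compl.2 (hij k)⟩⟩
  have hcardΩ : Fintype.card (Fin n → Fin r → Fin n) = D := by
    simp [hD, Fintype.card_fun]
  have hE : ∀ i j, p.toMeasure (E i j) ≤ (N : ENNReal) / (D : ENNReal) := by
    intro i j
    rw [PMF.toMeasure_uniformOfFintype_apply _ (hmeas _), hcardΩ]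
    have hcard_le : Fintype.card (E i j) ≤ N := by
      have e : (E i j) ≃ {Y : Fin n → Fin r → Fin n // ∀ k, Y i k ∈ (T j)ᶜ} :=
        Equiv.subtypeEquivRight (fun Y => Iff.rfl)
      rw [Fintype.card_congr e, card_hit n r i ((T j)ᶜ), hN]
      have hc : (T j)ᶜ.card ≤ n - m := by
        rw [Finset.card_compl, Fintype.card_fin]
        have := hT j; omega
      exact Nat.mul_le_mul_right _ (Nat.pow_le_pow_left hc r)
    refine ENNReal.div_le_div (Nat.cast_le.mpr ?_) le_rfl
    convert hcard_le using 2
  have hD0 : ((D : ℕ) : ENNReal) ≠ 0 := by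
    have hDpos : 0 < D := by rw [hD]; positivity
    exact_mod_cast hDpos.ne'
  have hDt : ((D : ℕ) : ENNReal) ≠ ⊤ := ENNReal.natCast_ne_top _
  have hbad : p.toMeasure Gᶜ ≤ 1 / (n : ENNReal) := by
    calc p.toMeasure Gᶜ ≤ p.toMeasure (⋃ i, ⋃ j, E i j) := measure_mono hcompl
      _ ≤ ∑' i : Fin n, p.toMeasure (⋃ j, E i j) := measure_iUnion_le _
      _ ≤ ∑' i : Fin n, ∑' j : Fin n, p.toMeasure (E i j) :=
          ENNReal.tsum_le_tsum fun i => measure_iUnion_le _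
      _ ≤ ∑' _i : Fin n, ∑' _j : Fin n, (N : ENNReal) / (D : ENNReal) :=
          ENNReal.tsum_le_tsum fun i => ENNReal.tsum_le_tsum fun j => hE i j
      _ = (n : ENNReal) * ((n : ENNReal) * ((N : ENNReal) / (D : ENNReal))) := by
          simp [tsum_fintype, Finset.sum_const, Finset.card_univ, nsmul_eq_mul]
      _ ≤ 1 / (n : ENNReal) := by
          rw [ENNReal.le_div_iff_mul_le (Or.inl (by exact_mod_cast hn0.ne'))
            (Or.inl (ENNReal.natCast_ne_top n))]
          have heq : (n : ENNReal) * ((n : ENNReal) * ((N : ENNReal) / (D : ENNReal))) * n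
              = ((n : ENNReal) * n * n * N) / D := by
            rw [div_eq_mul_inv, div_eq_mul_inv]; ring
          rw [heq, ENNReal.div_le_iff_le_mul (Or.inl hD0) (Or.inl hDt), one_mul]
          have : ((n * n * n * N : ℕ) : ENNReal) ≤ ((D : ℕ) : ENNReal) := by
            exact_mod_cast (by calc n * n * n * N = n ^ 3 * N := by ring
                                _ ≤ D := keyN : n * n * n * N ≤ D)
          exact_mod_cast this
  have h1 : p.toMeasure G + p.toMeasure Gᶜ = 1 := by
    rw [measure_add_measure_compl (hmeas G)]
    exact measure_univ
  rw [tsub_le_iff_right]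
  calc (1 : ENNReal) = p.toMeasure G + p.toMeasure Gᶜ := h1.symm
    _ ≤ p.toMeasure G + 1 / (n : ENNReal) := add_le_add le_rfl hbad
end

section
/- Let x_1, …, x_n be distinct points in a type 𝒳 with distance function D satisfying D(x_i, x_i) = 0 and D(x_i, x_j) > 0 for x_i ≠ x_j, and let E be the edge set of a navigable graph for x_1, …, x_n under D. Then for every index j ∈ {1, …, n} and every real r ≥ 0, letting S = { i ∈ {1, …, n} : D(x_j, x_i) ≤ r }, the number of edges of E lying in S × S is at least |S| − 1. -/
/-- Required connections within neighborhoods: in any navigable graph, for any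
center `j` and radius `r ≥ 0`, the ball `S = {i : D(x j, x i) ≤ r}` must contain at
least `|S| - 1` edges of the graph. -/
theorem edges_within_ball {n : ℕ} {X : Type} (x : Fin n → X) (D : X → X → ℝ)
    (hx : Function.Injective x)
    (hD0 : ∀ i, D (x i) (x i) = 0)
    (hDpos : ∀ i j, x i ≠ x j → 0 < D (x i) (x j))
    (E : Finset (Fin n × Fin n)) (hE : Navigable x D E)
    (j : Fin n) (r : ℝ) (hr : 0 ≤ r) :
    (Finset.univ.filter (fun i : Fin n => D (x j) (x i) ≤ r)).card - 1 ≤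
      (E.filter (fun e : Fin n × Fin n =>
        D (x j) (x e.1) ≤ r ∧ D (x j) (x e.2) ≤ r)).card := by
  classical
  set S := Finset.univ.filter (fun i : Fin n => D (x j) (x i) ≤ r) with hS
  have hjS : j ∈ S := by
    simp [hS, hD0 j, hr]
  have hcard : S.card - 1 = (S.erase j).card := by
    rw [Finset.card_erase_of_mem hjS]
  rw [hcard]
  set f : Fin n → Fin n × Fin n := fun s =>
    if h : s ≠ j then (s, Classical.choose (hE j s h)) else (s, s) with hf
  apply Finset.card_le_card_of_injOn f
  · intro s hs
    have hsj : s ≠ j := Finset.ne_of_mem_erase hs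
    have hsS : s ∈ S := Finset.mem_of_mem_erase hs
    have hsr : D (x j) (x s) ≤ r := by
      simpa [hS] using hsS
    obtain ⟨hmem, hlt⟩ := Classical.choose_spec (hE j s hsj)
    have hvr : D (x j) (x (Classical.choose (hE j s hsj))) ≤ r := by
      rcases hlt with h | ⟨h, _⟩
      · linarith
      · linarith
    simp only [hf, dif_pos hsj, Finset.mem_filter]
    exact Finset.mem_filter.mpr ⟨hmem, hsr, hvr⟩
  · intro a _ b _ hab
    have : (f a).1 = (f b).1 := by rw [hab]
    simp only [hf] at this
    split_ifs at this <;> simpa using this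
end

section
/- Let n ≥ 1, let L ≥ 1 and W ≥ 1 be reals, and let 𝒪_1, …, 𝒪_n ⊆ {1, …, n} be subsets satisfying: (i) j ∈ 𝒪_j for every j; (ii) membership is symmetric, i.e. i ∈ 𝒪_j if and only if j ∈ 𝒪_i; (iii) |𝒪_j| ≥ L for every j; and (iv) |𝒪_i ∩ 𝒪_j| ≤ W for all i ≠ j. Suppose E ⊆ {1, …, n} × {1, …, n} is a set of ordered pairs with u ≠ v for every (u, v) ∈ E, such that for every j the number of pairs of E lying in 𝒪_j × 𝒪_j is at least |𝒪_j| − 1. Then |E| ≥ n·(L − 1)/W. -/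
/-- Deterministic counting lemma at the core of the lower bound: if the
neighborhoods `𝒪 j` each contain their center, have symmetric membership, have
size at least `L`, pairwise intersections at most `W`, and a set `E` of ordered
pairs (with distinct endpoints) supplies at least `|𝒪 j| - 1` pairs inside each
`𝒪 j × 𝒪 j`, then `|E| ≥ n (L - 1) / W`. -/
theorem edge_counting_lower_bound (n : ℕ) (hn : 1 ≤ n) (L W : ℝ)
    (hL : 1 ≤ L) (hW : 1 ≤ W) (O : Fin n → Finset (Fin n))
    (hself : ∀ j, j ∈ O j)
    (hsymm : ∀ i j : Fin n, i ∈ O j ↔ j ∈ O i)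
    (hlarge : ∀ j, L ≤ ((O j).card : ℝ))
    (hsmall : ∀ i j : Fin n, i ≠ j → ((O i ∩ O j).card : ℝ) ≤ W)
    (E : Finset (Fin n × Fin n))
    (hne : ∀ e ∈ E, (e : Fin n × Fin n).1 ≠ e.2)
    (hcover : ∀ j : Fin n, ((O j).card : ℝ) - 1 ≤
      ((E.filter (fun e : Fin n × Fin n => e.1 ∈ O j ∧ e.2 ∈ O j)).card : ℝ)) :
    (n : ℝ) * (L - 1) / W ≤ (E.card : ℝ) := by
  have hW0 : (0:ℝ) < W := lt_of_lt_of_le one_pos hW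
  rw [div_le_iff₀ hW0]
  -- double counting sum
  have hswap :
      (∑ j : Fin n, ((E.filter (fun e : Fin n × Fin n => e.1 ∈ O j ∧ e.2 ∈ O j)).card : ℝ))
        = ∑ e ∈ E, ((O e.1 ∩ O e.2).card : ℝ) := by
    have : ∀ j : Fin n,
        ((E.filter (fun e : Fin n × Fin n => e.1 ∈ O j ∧ e.2 ∈ O j)).card : ℝ)
          = ∑ e ∈ E, (if e.1 ∈ O j ∧ e.2 ∈ O j then (1:ℝ) else 0) := by
      intro j
      rw [Finset.card_filter, Nat.cast_sum]
      simp
    simp_rw [this]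
    rw [Finset.sum_comm]
    refine Finset.sum_congr rfl ?_
    intro e _
    have : ∀ j : Fin n, (e.1 ∈ O j ∧ e.2 ∈ O j) ↔ j ∈ O e.1 ∩ O e.2 := by
      intro j
      simp [Finset.mem_inter, hsymm e.1 j, hsymm e.2 j]
    simp_rw [this]
    simp [Finset.sum_ite_mem]
    congr 1
    ext x
    simp [Finset.mem_inter]
  have h1 : (n : ℝ) * (L - 1) ≤
      ∑ j : Fin n, ((E.filter (fun e : Fin n × Fin n => e.1 ∈ O j ∧ e.2 ∈ O j)).card : ℝ) := by
    calc (n : ℝ) * (L - 1) = ∑ _j : Fin n, (L - 1) := by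
          simp [Finset.sum_const, mul_comm]
          ring
      _ ≤ _ := by
          refine Finset.sum_le_sum fun j _ => ?_
          have := hcover j
          have := hlarge j
          linarith
  have h2 : ∑ e ∈ E, ((O e.1 ∩ O e.2).card : ℝ) ≤ ∑ _e ∈ E, W := by
    refine Finset.sum_le_sum fun e he => hsmall e.1 e.2 (hne e he)
  calc (n : ℝ) * (L - 1) ≤ _ := h1
    _ = ∑ e ∈ E, ((O e.1 ∩ O e.2).card : ℝ) := hswap
    _ ≤ ∑ _e ∈ E, W := h2
    _ = (E.card : ℝ) * W := by simp [mul_comm]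
end

section
/- There are universal constants c_1 and c such that for all sufficiently large n and all d ≥ c_1·log₂ n, there exists c_h ∈ [1/3, 1] with the following property: if x_1, …, x_n are independent random vectors each uniformly distributed on {−1, 1}^d, then with probability at least 99/100, for every pair i ≠ j the near-neighborhoods 𝒪_i and 𝒪_j satisfy |𝒪_i ∩ 𝒪_j| ≤ 10·max( log₂ n, n^{c·√(log₂ n / d)} ). -/
/-- The ±1 vector in `ℝ^d` encoded by a Boolean vector. -/
def signVec {d : ℕ} (ω : Fin d → Bool) : Fin d → ℝ :=
  fun k => if ω k then 1 else -1

/-- The near-neighborhood of index `j`: all indices `i` with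
`⟨x_i, x_j⟩ ≥ c_h √(d ln n)`. -/
noncomputable def nearNbhd {n d : ℕ} (x : Fin n → Fin d → ℝ) (ch : ℝ) (j : Fin n) :
    Finset (Fin n) :=
  Finset.univ.filter
    (fun i => ch * Real.sqrt ((d : ℝ) * Real.log n) ≤ ∑ k : Fin d, x i k * x j k)

open Finset Real

lemma signVec_sq {d : ℕ} (u : Fin d → Bool) (m : Fin d) : signVec u m ^ 2 = 1 := by
  simp only [signVec]; split <;> norm_num

lemma sum_prod_bool (d : ℕ) (g : Fin d → Bool → ℝ) :
    ∑ ε : Fin d → Bool, ∏ m, g m (ε m) = ∏ m, (g m true + g m false) := by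
  rw [← Fintype.piFinset_univ, ← Finset.prod_univ_sum]
  exact Finset.prod_congr rfl fun m _ => by rw [Fintype.sum_bool]

lemma hoeffding_count (d : ℕ) (v : Fin d → ℝ) (a : ℝ) (ha : 0 < a)
    (hv : 0 < ∑ m, v m ^ 2) :
    ((univ.filter (fun ε : Fin d → Bool => a ≤ ∑ m, signVec ε m * v m)).card : ℝ) ≤
      2 ^ d * Real.exp (-(a ^ 2) / (2 * ∑ m, v m ^ 2)) := by
  set V := ∑ m, v m ^ 2 with hV
  set z := a / V with hz
  have hzpos : 0 < z := div_pos ha hv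
  have step1 : ((univ.filter (fun ε : Fin d → Bool => a ≤ ∑ m, signVec ε m * v m)).card : ℝ) ≤
      ∑ ε : Fin d → Bool, Real.exp (z * (∑ m, signVec ε m * v m) - z * a) := by
    rw [← Finset.sum_filter_add_sum_filter_not univ
      (fun ε : Fin d → Bool => a ≤ ∑ m, signVec ε m * v m)]
    have h1 : ((univ.filter (fun ε : Fin d → Bool => a ≤ ∑ m, signVec ε m * v m)).card : ℝ) ≤
        ∑ ε ∈ univ.filter (fun ε : Fin d → Bool => a ≤ ∑ m, signVec ε m * v m),
          Real.exp (z * (∑ m, signVec ε m * v m) - z * a) := by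
      rw [Finset.card_eq_sum_ones]
      push_cast
      apply Finset.sum_le_sum
      intro ε hε
      rw [Finset.mem_filter] at hε
      have : 0 ≤ z * (∑ m, signVec ε m * v m) - z * a := by
        have := mul_le_mul_of_nonneg_left hε.2 hzpos.le
        linarith
      calc (1:ℝ) = Real.exp 0 := (Real.exp_zero).symm
        _ ≤ _ := Real.exp_le_exp.2 this
    refine h1.trans (le_add_of_nonneg_right ?_)
    exact Finset.sum_nonneg fun _ _ => (Real.exp_pos _).le
  have step2 : ∑ ε : Fin d → Bool, Real.exp (z * (∑ m, signVec ε m * v m) - z * a) =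
      Real.exp (-(z*a)) * ∏ m : Fin d, (Real.exp (z * v m) + Real.exp (-(z * v m))) := by
    have e1 : ∀ ε : Fin d → Bool, Real.exp (z * (∑ m, signVec ε m * v m) - z * a) =
        Real.exp (-(z*a)) * ∏ m : Fin d,
          (fun (m : Fin d) (b : Bool) => Real.exp (z * ((if b then (1:ℝ) else -1) * v m))) m (ε m) := by
      intro ε
      rw [sub_eq_add_neg, add_comm, Real.exp_add, Finset.mul_sum, Real.exp_sum]
      simp [signVec]
    rw [Finset.sum_congr rfl (fun ε _ => e1 ε), ← Finset.mul_sum,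
      sum_prod_bool d (fun (m : Fin d) (b : Bool) => Real.exp (z * ((if b then (1:ℝ) else -1) * v m)))]
    congr 1
    apply Finset.prod_congr rfl
    intro m _
    norm_num
  have step3 : ∀ m : Fin d, Real.exp (z * v m) + Real.exp (-(z * v m)) ≤
      2 * Real.exp ((z * v m)^2 / 2) := by
    intro m
    have := Real.cosh_le_exp_half_sq (z * v m)
    rw [Real.cosh_eq] at this
    linarith
  have step4 : ∏ m : Fin d, (Real.exp (z * v m) + Real.exp (-(z * v m))) ≤
      ∏ m : Fin d, 2 * Real.exp ((z * v m)^2 / 2) := by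
    apply Finset.prod_le_prod
    · intro m _; positivity
    · intro m _; exact step3 m
  have step5 : ∏ m : Fin d, 2 * Real.exp ((z * v m)^2 / 2) =
      2 ^ d * Real.exp (z^2 * V / 2) := by
    rw [Finset.prod_mul_distrib, Finset.prod_const, Finset.card_univ, Fintype.card_fin,
      ← Real.exp_sum]
    congr 1
    rw [hV, Finset.mul_sum, Finset.sum_div]
    exact congrArg Real.exp (Finset.sum_congr rfl fun m _ => by ring)
  have final : Real.exp (-(z*a)) * (2 ^ d * Real.exp (z^2 * V / 2)) =
      2 ^ d * Real.exp (-(a ^ 2) / (2 * V)) := by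
    rw [← mul_assoc, mul_comm (Real.exp _) ((2:ℝ)^d), mul_assoc, ← Real.exp_add]
    congr 2
    rw [hz]
    field_simp
    ring
  calc ((univ.filter (fun ε : Fin d → Bool => a ≤ ∑ m, signVec ε m * v m)).card : ℝ)
      ≤ ∑ ε : Fin d → Bool, Real.exp (z * (∑ m, signVec ε m * v m) - z * a) := step1
    _ = Real.exp (-(z*a)) * ∏ m : Fin d, (Real.exp (z * v m) + Real.exp (-(z * v m))) := step2
    _ ≤ Real.exp (-(z*a)) * ∏ m : Fin d, 2 * Real.exp ((z * v m)^2 / 2) := by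
        apply mul_le_mul_of_nonneg_left step4 (Real.exp_pos _).le
    _ = Real.exp (-(z*a)) * (2 ^ d * Real.exp (z^2 * V / 2)) := by rw [step5]
    _ = 2 ^ d * Real.exp (-(a ^ 2) / (2 * V)) := final


lemma card_fun_bool (d : ℕ) : (univ : Finset (Fin d → Bool)).card = 2 ^ d := by
  simp [Finset.card_univ]

lemma master_count (n d : ℕ) (i j : Fin n) (hij : i ≠ j)
    (S : Finset (Fin n)) (hSi : i ∉ S) (hSj : j ∉ S)
    (R : (Fin d → Bool) → (Fin d → Bool) → Prop) [∀ u v, Decidable (R u v)]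
    (Q : (Fin d → Bool) → (Fin d → Bool) → (Fin d → Bool) → Prop)
    [∀ u v ε, Decidable (Q u v ε)]
    (q₁ q₂ : ℝ) (hq₁ : 0 ≤ q₁) (hq₂ : 0 ≤ q₂)
    (hR : ∀ u, ((univ.filter (fun v => R u v)).card : ℝ) ≤ 2 ^ d * q₁)
    (hQ : ∀ u v, R u v → ((univ.filter (fun ε => Q u v ε)).card : ℝ) ≤ 2 ^ d * q₂) :
    ((univ.filter (fun ω : Fin n → Fin d → Bool =>
        R (ω i) (ω j) ∧ ∀ k ∈ S, Q (ω i) (ω j) (ω k))).card : ℝ) ≤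
      2 ^ (n * d) * q₁ * q₂ ^ S.card := by
  classical
  set U : Finset (Fin n) := (univ.erase i).erase j with hU
  have hSU : S ⊆ U := by
    intro k hk
    simp only [hU, Finset.mem_erase, Finset.mem_univ, and_true]
    exact ⟨fun h => hSj (h ▸ hk), fun h => hSi (h ▸ hk)⟩
  have hUcard : U.card = n - 2 := by
    rw [hU, Finset.card_erase_of_mem, Finset.card_erase_of_mem (Finset.mem_univ i),
      Finset.card_univ, Fintype.card_fin]
    · omega
    · exact Finset.mem_erase.2 ⟨hij.symm, Finset.mem_univ j⟩
  have hScard : S.card ≤ n - 2 := hUcard ▸ Finset.card_le_card hSU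
  -- the covering family
  set t : (Fin d → Bool) → (Fin d → Bool) → Fin n → Finset (Fin d → Bool) :=
    fun u v k => if k = i then {u} else if k = j then (if R u v then {v} else ∅)
      else if k ∈ S then univ.filter (fun ε => Q u v ε) else univ with ht
  have cover : (univ.filter (fun ω : Fin n → Fin d → Bool =>
        R (ω i) (ω j) ∧ ∀ k ∈ S, Q (ω i) (ω j) (ω k))) ⊆
      (univ ×ˢ univ).biUnion (fun p => Fintype.piFinset (t p.1 p.2)) := by
    intro ω hω
    rw [Finset.mem_filter] at hω
    obtain ⟨-, hRω, hQω⟩ := hω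
    refine Finset.mem_biUnion.2 ⟨(ω i, ω j), Finset.mem_product.2 ⟨Finset.mem_univ _, Finset.mem_univ _⟩, ?_⟩
    rw [Fintype.mem_piFinset]
    intro k
    simp only [ht]
    by_cases hki : k = i
    · simp [hki]
    by_cases hkj : k = j
    · simp [hki, hkj, hij.symm, hRω]
    by_cases hkS : k ∈ S
    · simp only [hki, hkj, hkS, if_false, if_true, Finset.mem_filter]
      exact ⟨Finset.mem_univ _, hQω k hkS⟩
    · simp [hki, hkj, hkS]
  have card_le : ((univ.filter (fun ω : Fin n → Fin d → Bool =>
        R (ω i) (ω j) ∧ ∀ k ∈ S, Q (ω i) (ω j) (ω k))).card : ℝ) ≤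
      ∑ u : Fin d → Bool, ∑ v : Fin d → Bool, ((Fintype.piFinset (t u v)).card : ℝ) := by
    have h1 := Finset.card_le_card cover
    have h2 := Finset.card_biUnion_le (s := univ ×ˢ univ)
      (t := fun p => Fintype.piFinset (t p.1 p.2))
    have := h1.trans h2
    calc ((univ.filter (fun ω : Fin n → Fin d → Bool =>
        R (ω i) (ω j) ∧ ∀ k ∈ S, Q (ω i) (ω j) (ω k))).card : ℝ)
        ≤ ((∑ p ∈ univ ×ˢ univ, (Fintype.piFinset (t p.1 p.2)).card : ℕ) : ℝ) := by
          exact_mod_cast this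
      _ = ∑ u : Fin d → Bool, ∑ v : Fin d → Bool, ((Fintype.piFinset (t u v)).card : ℝ) := by
          rw [Finset.sum_product]; push_cast; rfl
  -- bound each piFinset card
  have inner : ∀ u v : Fin d → Bool, ((Fintype.piFinset (t u v)).card : ℝ) ≤
      (if R u v then ((2:ℝ) ^ d * q₂) ^ S.card * ((2:ℝ) ^ d) ^ (n - 2 - S.card) else 0) := by
    intro u v
    rw [Fintype.card_piFinset]
    by_cases hRuv : R u v
    · simp only [hRuv, if_true]
      push_cast
      -- split the product
      have e1 : ∏ k : Fin n, ((t u v k).card : ℝ) =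
          ((t u v i).card : ℝ) * ∏ k ∈ univ.erase i, ((t u v k).card : ℝ) :=
        (Finset.mul_prod_erase univ _ (Finset.mem_univ i)).symm
      have hjmem : j ∈ univ.erase i := Finset.mem_erase.2 ⟨hij.symm, Finset.mem_univ j⟩
      have e2 : ∏ k ∈ univ.erase i, ((t u v k).card : ℝ) =
          ((t u v j).card : ℝ) * ∏ k ∈ U, ((t u v k).card : ℝ) :=
        (Finset.mul_prod_erase _ _ hjmem).symm
      have e3 : (∏ k ∈ U \ S, ((t u v k).card : ℝ)) * ∏ k ∈ S, ((t u v k).card : ℝ) =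
          ∏ k ∈ U, ((t u v k).card : ℝ) := Finset.prod_sdiff hSU
      have ci : ((t u v i).card : ℝ) = 1 := by simp [ht]
      have cj : ((t u v j).card : ℝ) = 1 := by simp [ht, hij.symm, hRuv]
      have cS : ∏ k ∈ S, ((t u v k).card : ℝ) ≤ ((2:ℝ) ^ d * q₂) ^ S.card := by
        rw [← Finset.prod_const]
        apply Finset.prod_le_prod (fun k _ => Nat.cast_nonneg _)
        intro k hk
        have hki : k ≠ i := fun h => hSi (h ▸ hk)
        have hkj : k ≠ j := fun h => hSj (h ▸ hk)
        simp only [ht, hki, hkj, hk, if_false, if_true]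
        exact hQ u v hRuv
      have cRest : ∏ k ∈ U \ S, ((t u v k).card : ℝ) = ((2:ℝ) ^ d) ^ (n - 2 - S.card) := by
        rw [Finset.prod_congr rfl (g := fun _ => ((2:ℝ)^d)) ?_, Finset.prod_const,
          Finset.card_sdiff_of_subset hSU, hUcard]
        intro k hk
        rw [Finset.mem_sdiff] at hk
        have hkU := hk.1
        rw [hU, Finset.mem_erase, Finset.mem_erase] at hkU
        simp only [ht, hkU.2.1, hkU.1, hk.2, if_false]
        exact_mod_cast card_fun_bool d
      calc ∏ k : Fin n, ((t u v k).card : ℝ)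
          = ((t u v i).card : ℝ) * (((t u v j).card : ℝ) * ∏ k ∈ U, ((t u v k).card : ℝ)) := by
            rw [e1, e2]
        _ = ∏ k ∈ U, ((t u v k).card : ℝ) := by rw [ci, cj]; ring
        _ = (∏ k ∈ U \ S, ((t u v k).card : ℝ)) * ∏ k ∈ S, ((t u v k).card : ℝ) := e3.symm
        _ ≤ ((2:ℝ) ^ d) ^ (n - 2 - S.card) * ((2:ℝ) ^ d * q₂) ^ S.card := by
            rw [cRest]
            apply mul_le_mul_of_nonneg_left cS (by positivity)
        _ = ((2:ℝ) ^ d * q₂) ^ S.card * ((2:ℝ) ^ d) ^ (n - 2 - S.card) := by ring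
    · simp only [hRuv, if_false]
      have hz : ((t u v j).card : ℝ) = 0 := by simp [ht, hij.symm, hRuv]
      push_cast
      rw [← Finset.mul_prod_erase univ (fun k => ((t u v k).card : ℝ)) (Finset.mem_univ j)]
      simp only [hz, zero_mul, le_refl]
  -- sum over v for fixed u
  set C : ℝ := ((2:ℝ) ^ d * q₂) ^ S.card * ((2:ℝ) ^ d) ^ (n - 2 - S.card) with hC
  have hCnn : 0 ≤ C := by positivity
  have perU : ∀ u : Fin d → Bool,
      ∑ v : Fin d → Bool, ((Fintype.piFinset (t u v)).card : ℝ) ≤ (2 ^ d * q₁) * C := by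
    intro u
    calc ∑ v : Fin d → Bool, ((Fintype.piFinset (t u v)).card : ℝ)
        ≤ ∑ v : Fin d → Bool, (if R u v then C else 0) :=
          Finset.sum_le_sum (fun v _ => inner u v)
      _ = ∑ v ∈ univ.filter (fun v => R u v), C := (Finset.sum_filter _ _).symm
      _ = ((univ.filter (fun v => R u v)).card : ℝ) * C := by
          rw [Finset.sum_const, nsmul_eq_mul]
      _ ≤ (2 ^ d * q₁) * C := mul_le_mul_of_nonneg_right (hR u) hCnn
  have hn2 : 2 ≤ n := by
    have h1 := i.2
    have h2 := j.2
    have h3 : i.val ≠ j.val := fun h => hij (Fin.ext h)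
    omega
  have keyeq : (2:ℝ) ^ d * ((2 ^ d * q₁) * C) = 2 ^ (n * d) * q₁ * q₂ ^ S.card := by
    rw [hC, mul_pow]
    have h1 : (2:ℝ) ^ d * ((2 ^ d * q₁) * (((2:ℝ)^d)^S.card * q₂ ^ S.card *
        ((2:ℝ)^d) ^ (n - 2 - S.card))) =
        ((2:ℝ)^d)^(1 + 1 + S.card + (n - 2 - S.card)) * q₁ * q₂ ^ S.card := by
      rw [pow_add, pow_add, pow_add, pow_one]
      ring
    have h2 : 1 + 1 + S.card + (n - 2 - S.card) = n := by omega
    rw [h1, h2, ← pow_mul, mul_comm d n]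
  calc ((univ.filter (fun ω : Fin n → Fin d → Bool =>
        R (ω i) (ω j) ∧ ∀ k ∈ S, Q (ω i) (ω j) (ω k))).card : ℝ)
      ≤ ∑ u : Fin d → Bool, ∑ v : Fin d → Bool, ((Fintype.piFinset (t u v)).card : ℝ) := card_le
    _ ≤ ∑ _u : Fin d → Bool, (2 ^ d * q₁) * C := Finset.sum_le_sum (fun u _ => perU u)
    _ = (2:ℝ) ^ d * ((2 ^ d * q₁) * C) := by
        rw [Finset.sum_const, nsmul_eq_mul, card_fun_bool]
        push_cast
        ring
    _ = 2 ^ (n * d) * q₁ * q₂ ^ S.card := keyeq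

lemma sum_sq_signVec (d : ℕ) (u : Fin d → Bool) :
    ∑ m : Fin d, signVec u m ^ 2 = d := by
  simp [signVec_sq]

/-- count of `v` strongly correlated to a fixed `u` -/
lemma count_corr_single (d : ℕ) (hd : 0 < d) (u : Fin d → Bool) (θ : ℝ) (hθ : 0 < θ) :
    ((univ.filter (fun v : Fin d → Bool =>
        θ < ∑ m, signVec u m * signVec v m)).card : ℝ) ≤
      2 ^ d * Real.exp (-(θ ^ 2) / (2 * d)) := by
  have hsub : univ.filter (fun v : Fin d → Bool => θ < ∑ m, signVec u m * signVec v m) ⊆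
      univ.filter (fun v : Fin d → Bool => θ ≤ ∑ m, signVec v m * signVec u m) := by
    intro v hv
    rw [Finset.mem_filter] at hv ⊢
    refine ⟨Finset.mem_univ _, ?_⟩
    rw [Finset.sum_congr rfl (fun m _ => mul_comm (signVec v m) (signVec u m))]
    exact hv.2.le
  have hs : ∑ m : Fin d, (signVec u m) ^ 2 = d := sum_sq_signVec d u
  have hv : (0:ℝ) < ∑ m : Fin d, (signVec u m) ^ 2 := by
    rw [hs]; exact_mod_cast hd
  have := hoeffding_count d (signVec u) θ hθ hv
  rw [hs] at this
  calc ((univ.filter (fun v : Fin d → Bool => θ < ∑ m, signVec u m * signVec v m)).card : ℝ)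
      ≤ ((univ.filter (fun v : Fin d → Bool => θ ≤ ∑ m, signVec v m * signVec u m)).card : ℝ) := by
        exact_mod_cast Finset.card_le_card hsub
    _ ≤ 2 ^ d * Real.exp (-(θ ^ 2) / (2 * d)) := this

/-- count of `ε` close to both `u` and `v`, when `u, v` are weakly correlated -/
lemma count_pair_Q (d : ℕ) (u v : Fin d → Bool) (lnn γ : ℝ) (hlnn : 0 < lnn)
    (hγ : 0 < γ) (hd : 0 < d)
    (hR : ∑ m, signVec u m * signVec v m ≤ γ * d) :
    ((univ.filter (fun ε : Fin d → Bool =>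
        2 * Real.sqrt (d * lnn) ≤
          ∑ m, signVec ε m * (signVec u m + signVec v m))).card : ℝ) ≤
      2 ^ d * Real.exp (-lnn / (1 + γ)) := by
  set w : Fin d → ℝ := fun m => signVec u m + signVec v m with hw
  have hW : ∑ m : Fin d, w m ^ 2 = 2 * d + 2 * ∑ m, signVec u m * signVec v m := by
    have : ∀ m : Fin d, w m ^ 2 =
        signVec u m ^ 2 + signVec v m ^ 2 + 2 * (signVec u m * signVec v m) := by
      intro m; rw [hw]; ring
    rw [Finset.sum_congr rfl (fun m _ => this m), Finset.sum_add_distrib,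
      Finset.sum_add_distrib, sum_sq_signVec, sum_sq_signVec, ← Finset.mul_sum]
    ring
  have ha : 0 < 2 * Real.sqrt (d * lnn) := by
    have : (0:ℝ) < (d:ℝ) * lnn := by positivity
    positivity
  by_cases hW0 : ∑ m : Fin d, w m ^ 2 = 0
  · have hempty : univ.filter (fun ε : Fin d → Bool =>
        2 * Real.sqrt (d * lnn) ≤ ∑ m, signVec ε m * (w m)) = ∅ := by
      rw [Finset.filter_eq_empty_iff]
      intro ε _
      have hwz : ∀ m : Fin d, w m = 0 := by
        intro m
        have h := (Finset.sum_eq_zero_iff_of_nonneg (fun m _ => sq_nonneg (w m))).1 hW0 m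
          (Finset.mem_univ m)
        exact pow_eq_zero_iff (by norm_num) |>.1 h
      have : ∑ m : Fin d, signVec ε m * w m = 0 :=
        Finset.sum_eq_zero (fun m _ => by rw [hwz m, mul_zero])
      rw [this]
      linarith
    rw [hw] at hempty
    rw [hempty]
    simp only [Finset.card_empty, Nat.cast_zero]
    positivity
  · have hWpos : 0 < ∑ m : Fin d, w m ^ 2 :=
      lt_of_le_of_ne (Finset.sum_nonneg fun m _ => sq_nonneg _) (Ne.symm hW0)
    have key := hoeffding_count d w (2 * Real.sqrt (d * lnn)) ha hWpos
    have hexp : Real.exp (-((2 * Real.sqrt (d * lnn)) ^ 2) / (2 * ∑ m : Fin d, w m ^ 2)) ≤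
        Real.exp (-lnn / (1 + γ)) := by
      apply Real.exp_le_exp.2
      have hsq : (2 * Real.sqrt (d * lnn)) ^ 2 = 4 * (d * lnn) := by
        rw [mul_pow, Real.sq_sqrt (by positivity)]
        norm_num
      rw [hsq, neg_div, neg_div, neg_le_neg_iff]
      rw [div_le_div_iff₀ (by positivity) (by positivity)]
      have hWle : ∑ m : Fin d, w m ^ 2 ≤ 2 * d + 2 * (γ * d) := by
        rw [hW]; linarith
      calc lnn * (2 * ∑ m : Fin d, w m ^ 2) ≤ lnn * (2 * (2 * d + 2 * (γ * d))) := by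
            apply mul_le_mul_of_nonneg_left _ hlnn.le
            linarith
        _ = 4 * (d * lnn) * (1 + γ) := by ring
    calc ((univ.filter (fun ε : Fin d → Bool =>
        2 * Real.sqrt (d * lnn) ≤ ∑ m, signVec ε m * (signVec u m + signVec v m))).card : ℝ)
        ≤ 2 ^ d * Real.exp (-((2 * Real.sqrt (d * lnn)) ^ 2) / (2 * ∑ m : Fin d, w m ^ 2)) := key
      _ ≤ 2 ^ d * Real.exp (-lnn / (1 + γ)) := by
          apply mul_le_mul_of_nonneg_left hexp (by positivity)

set_option maxHeartbeats 3200000 in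
open Classical in
lemma bad_card_bound (n d : ℕ) (hn : 100 ≤ n) (hd : 100 * Real.logb 2 n ≤ (d:ℝ)) :
    100 * (univ.filter (fun ω : Fin n → Fin d → Bool => ¬ ∀ i j : Fin n, i ≠ j →
      ((nearNbhd (fun u => signVec (ω u)) 1 i ∩
          nearNbhd (fun u => signVec (ω u)) 1 j).card : ℝ) ≤
        10 * max (Real.logb 2 n)
          ((n : ℝ) ^ ((3:ℝ) * Real.sqrt (Real.logb 2 n / (d : ℝ)))))).card ≤
      2 ^ (n * d) := by
  classical
  -- ### numeric setup
  have hn1 : (1:ℝ) < n := by exact_mod_cast lt_of_lt_of_le (by norm_num) hn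
  have hn0 : (0:ℝ) < n := by linarith
  set L : ℝ := Real.logb 2 n with hLdef
  have hL6 : 6 ≤ L := by
    have h64 : (2:ℝ) ^ (6:ℝ) ≤ (n:ℝ) := by
      rw [show (2:ℝ) ^ (6:ℝ) = 64 by
        rw [show (6:ℝ) = ((6:ℕ):ℝ) by norm_num, Real.rpow_natCast]; norm_num]
      exact_mod_cast le_trans (by norm_num) hn
    calc (6:ℝ) = Real.logb 2 ((2:ℝ) ^ (6:ℝ)) := (Real.logb_rpow (by norm_num) (by norm_num)).symm
      _ ≤ L := Real.logb_le_logb_of_le (by norm_num) (by positivity) h64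
  have hlog2 : (0.6931:ℝ) < Real.log 2 := by
    have := Real.log_two_gt_d9; linarith
  have hlog2' : Real.log 2 < 0.6932 := by
    have := Real.log_two_lt_d9; linarith
  have hlnnL : Real.log n = L * Real.log 2 := by
    rw [hLdef, Real.logb, div_mul_cancel₀]
    exact ne_of_gt (Real.log_pos (by norm_num))
  have hlnn4 : 4 ≤ Real.log n := by
    rw [hlnnL]; nlinarith
  have hlnn0 : 0 < Real.log n := by linarith
  have hd600 : (600:ℝ) ≤ d := by nlinarith
  have hdpos : (0:ℝ) < d := by linarith
  have hdpos' : 0 < d := by exact_mod_cast hdpos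
  -- gamma
  set γ : ℝ := Real.sqrt (8 * Real.log n / d) with hγdef
  have hγpos : 0 < γ := Real.sqrt_pos.2 (by positivity)
  have hγsq : γ ^ 2 = 8 * Real.log n / d := Real.sq_sqrt (by positivity)
  -- M
  set M : ℝ := (n : ℝ) ^ ((3:ℝ) * Real.sqrt (L / d)) with hMdef
  have hM1 : 1 ≤ M := Real.one_le_rpow hn1.le (by positivity)
  -- q₂ and n * q₂ ≤ M
  set q₂ : ℝ := Real.exp (-Real.log n / (1 + γ)) with hq₂def
  have hq₂pos : 0 < q₂ := Real.exp_pos _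
  have hγ3 : γ ≤ 3 * Real.sqrt (L / d) := by
    have h89 : 8 * Real.log n ≤ 9 * L := by
      rw [hlnnL]; nlinarith
    have h1 : γ ≤ Real.sqrt (9 * (L / d)) := by
      rw [hγdef]
      apply Real.sqrt_le_sqrt
      rw [← mul_div_assoc]
      gcongr
    calc γ ≤ Real.sqrt (9 * (L / d)) := h1
      _ = 3 * Real.sqrt (L / d) := by
        rw [show (9:ℝ) = 3^2 by norm_num, Real.sqrt_mul (by positivity),
          Real.sqrt_sq (by norm_num)]
  have hnq₂ : (n:ℝ) * q₂ ≤ M := by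
    have e1 : (n:ℝ) * q₂ = Real.exp (Real.log n - Real.log n / (1 + γ)) := by
      rw [hq₂def, Real.exp_sub, Real.exp_log hn0, neg_div, Real.exp_neg]
      ring
    have e2 : Real.log n - Real.log n / (1 + γ) = Real.log n * γ / (1 + γ) := by
      field_simp
      ring
    rw [e1, e2, hMdef, Real.rpow_def_of_pos hn0]
    apply Real.exp_le_exp.2
    calc Real.log n * γ / (1 + γ) ≤ Real.log n * γ :=
          div_le_self (by positivity) (by linarith)
      _ ≤ Real.log n * (3 * Real.sqrt (L / d)) :=
          mul_le_mul_of_nonneg_left hγ3 hlnn0.le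
  -- B and t
  set B : ℝ := 10 * max L M with hBdef
  have hBL : 10 * L ≤ B := by
    rw [hBdef]
    have := le_max_left L M
    linarith
  have hBM : 10 * M ≤ B := by
    rw [hBdef]
    have := le_max_right L M
    linarith
  have hB60 : 60 ≤ B := by linarith
  have hB0 : (0:ℝ) ≤ B := by linarith
  set t : ℕ := ⌊B⌋₊ - 1 with htdef
  have hfloor60 : 60 ≤ ⌊B⌋₊ := Nat.le_floor (by exact_mod_cast hB60)
  have htcast : (t:ℝ) = (⌊B⌋₊:ℝ) - 1 := by
    rw [htdef, Nat.cast_sub (by omega : 1 ≤ ⌊B⌋₊), Nat.cast_one]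
  have ht_le : (t:ℝ) ≤ B - 1 := by
    have := Nat.floor_le hB0
    rw [htcast]; linarith
  have ht_ge : B - 2 ≤ (t:ℝ) := by
    have := Nat.lt_floor_add_one B
    rw [htcast]; linarith
  have ht10 : 10 ≤ t := by omega
  have htpos : (0:ℝ) < t := by
    have : (10:ℝ) ≤ t := by exact_mod_cast ht10
    linarith
  -- ### events
  set a : ℝ := Real.sqrt (d * Real.log n) with hadef
  set Q : (Fin d → Bool) → (Fin d → Bool) → (Fin d → Bool) → Prop :=
    fun u v ε => 2 * a ≤ ∑ m, signVec ε m * (signVec u m + signVec v m) with hQdef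
  set R : (Fin d → Bool) → (Fin d → Bool) → Prop :=
    fun u v => ∑ m, signVec u m * signVec v m ≤ γ * d with hRdef
  set U : Fin n → Fin n → Finset (Fin n) := fun i j => (univ.erase i).erase j with hUdef
  set E1 : Fin n → Fin n → Finset (Fin n → Fin d → Bool) := fun i j =>
    univ.filter (fun ω => γ * (d:ℝ) < ∑ m, signVec (ω i) m * signVec (ω j) m) with hE1def
  set E2 : Fin n → Fin n → Finset (Fin n → Fin d → Bool) := fun i j =>
    univ.filter (fun ω => R (ω i) (ω j) ∧
      t ≤ ((U i j).filter (fun k => Q (ω i) (ω j) (ω k))).card) with hE2def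
  -- Q count bound
  have hQcount : ∀ u v, R u v →
      ((univ.filter (fun ε => Q u v ε)).card : ℝ) ≤ 2 ^ d * q₂ := by
    intro u v hRuv
    rw [hq₂def]
    have := count_pair_Q d u v (Real.log n) γ hlnn0 hγpos hdpos' hRuv
    simpa [hQdef, hadef] using this
  -- E1 bound
  have hE1bound : ∀ i j : Fin n, i ≠ j →
      ((E1 i j).card : ℝ) ≤ 2 ^ (n*d) * Real.exp (-(4 * Real.log n)) := by
    intro i j hij
    have happ := master_count n d i j hij ∅ (notMem_empty i) (notMem_empty j)
      (fun u v => γ * (d:ℝ) < ∑ m, signVec u m * signVec v m)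
      (fun _ _ _ => True)
      (Real.exp (-(4 * Real.log n))) 1 (Real.exp_pos _).le zero_le_one
      (fun u => by
        have h2 : -((γ * (d:ℝ)) ^ 2) / (2 * (d:ℝ)) = -(4 * Real.log n) := by
          have h3 : (γ * (d:ℝ))^2 = (8 * Real.log n / d) * (d:ℝ)^2 := by
            rw [mul_pow, hγsq]
          rw [h3]
          field_simp
          ring
        have := count_corr_single d hdpos' u (γ * (d:ℝ)) (by positivity)
        rw [h2] at this
        exact this)
      (fun u v _ => by
        rw [Finset.filter_true_of_mem (fun _ _ => trivial), card_fun_bool, mul_one]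
        norm_cast)
    simp only [Finset.notMem_empty, false_implies, implies_true, and_true,
      Finset.card_empty, pow_zero, mul_one] at happ
    rw [hE1def]
    exact happ
  -- E2 bound
  have hE2bound : ∀ i j : Fin n, i ≠ j →
      ((E2 i j).card : ℝ) ≤ ((n-2).choose t : ℝ) * (2 ^ (n*d) * q₂ ^ t) := by
    intro i j hij
    have hUcard : (U i j).card = n - 2 := by
      rw [hUdef]
      rw [Finset.card_erase_of_mem, Finset.card_erase_of_mem (Finset.mem_univ i),
        Finset.card_univ, Fintype.card_fin]
      · omega
      · exact Finset.mem_erase.2 ⟨hij.symm, Finset.mem_univ j⟩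
    have cover : E2 i j ⊆ (Finset.powersetCard t (U i j)).biUnion (fun S =>
        univ.filter (fun ω : Fin n → Fin d → Bool =>
          R (ω i) (ω j) ∧ ∀ k ∈ S, Q (ω i) (ω j) (ω k))) := by
      intro ω hω
      rw [hE2def, Finset.mem_filter] at hω
      obtain ⟨-, hRω, hcnt⟩ := hω
      obtain ⟨S, hSsub, hScard⟩ := Finset.exists_subset_card_eq hcnt
      refine Finset.mem_biUnion.2 ⟨S, ?_, ?_⟩
      · exact Finset.mem_powersetCard.2 ⟨hSsub.trans (Finset.filter_subset _ _), hScard⟩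
      · rw [Finset.mem_filter]
        exact ⟨Finset.mem_univ _, hRω, fun k hk => (Finset.mem_filter.1 (hSsub hk)).2⟩
    have percard : ∀ S ∈ Finset.powersetCard t (U i j),
        ((univ.filter (fun ω : Fin n → Fin d → Bool =>
          R (ω i) (ω j) ∧ ∀ k ∈ S, Q (ω i) (ω j) (ω k))).card : ℝ) ≤
        2 ^ (n*d) * q₂ ^ t := by
      intro S hS
      rw [Finset.mem_powersetCard] at hS
      have hSi : i ∉ S := fun h => by
        have := hS.1 h
        rw [hUdef] at this
        exact (Finset.mem_erase.1 (Finset.mem_erase.1 this).2).1 rfl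
      have hSj : j ∉ S := fun h => by
        have := hS.1 h
        rw [hUdef] at this
        exact (Finset.mem_erase.1 this).1 rfl
      have happ := master_count n d i j hij S hSi hSj R Q 1 q₂ zero_le_one hq₂pos.le
        (fun u => by
          rw [mul_one]
          calc ((univ.filter (fun v => R u v)).card : ℝ) ≤ ((univ : Finset (Fin d → Bool)).card : ℝ) := by
                exact_mod_cast Finset.card_le_card (Finset.filter_subset _ _)
            _ = 2 ^ d := by rw [card_fun_bool]; push_cast; ring)
        hQcount
      rw [hS.2, mul_one] at happ
      exact happ
    calc ((E2 i j).card : ℝ) ≤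
        (((Finset.powersetCard t (U i j)).biUnion (fun S =>
          univ.filter (fun ω : Fin n → Fin d → Bool =>
            R (ω i) (ω j) ∧ ∀ k ∈ S, Q (ω i) (ω j) (ω k)))).card : ℝ) := by
          exact_mod_cast Finset.card_le_card cover
      _ ≤ ∑ S ∈ Finset.powersetCard t (U i j),
          ((univ.filter (fun ω : Fin n → Fin d → Bool =>
            R (ω i) (ω j) ∧ ∀ k ∈ S, Q (ω i) (ω j) (ω k))).card : ℝ) := by
          have := Finset.card_biUnion_le (s := Finset.powersetCard t (U i j))
            (t := fun S => univ.filter (fun ω : Fin n → Fin d → Bool =>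
              R (ω i) (ω j) ∧ ∀ k ∈ S, Q (ω i) (ω j) (ω k)))
          exact_mod_cast this
      _ ≤ ∑ _S ∈ Finset.powersetCard t (U i j), (2 ^ (n*d) * q₂ ^ t : ℝ) :=
          Finset.sum_le_sum percard
      _ = ((n-2).choose t : ℝ) * (2 ^ (n*d) * q₂ ^ t) := by
          rw [Finset.sum_const, nsmul_eq_mul, Finset.card_powersetCard, hUcard]
  -- ### Bad event cover
  set Bad : Finset (Fin n → Fin d → Bool) := univ.filter (fun ω => ¬ ∀ i j : Fin n, i ≠ j →
      ((nearNbhd (fun u => signVec (ω u)) 1 i ∩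
          nearNbhd (fun u => signVec (ω u)) 1 j).card : ℝ) ≤ B) with hBaddef
  have badcover : Bad ⊆ univ.offDiag.biUnion (fun p => E1 p.1 p.2 ∪ E2 p.1 p.2) := by
    intro ω hω
    rw [hBaddef, Finset.mem_filter] at hω
    have hω2 := hω.2
    push_neg at hω2
    obtain ⟨i, j, hij, hgt⟩ := hω2
    refine Finset.mem_biUnion.2 ⟨(i,j),
      Finset.mem_offDiag.2 ⟨Finset.mem_univ _, Finset.mem_univ _, hij⟩, ?_⟩
    rw [Finset.mem_union]
    by_cases hcorr : γ * (d:ℝ) < ∑ m, signVec (ω i) m * signVec (ω j) m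
    · left
      rw [hE1def, Finset.mem_filter]
      exact ⟨Finset.mem_univ _, hcorr⟩
    · right
      push_neg at hcorr
      rw [hE2def, Finset.mem_filter]
      refine ⟨Finset.mem_univ _, hcorr, ?_⟩
      have hsub : nearNbhd (fun u => signVec (ω u)) 1 i ∩ nearNbhd (fun u => signVec (ω u)) 1 j ⊆
          insert i (insert j ((U i j).filter (fun k => Q (ω i) (ω j) (ω k)))) := by
        intro k hk
        rw [Finset.mem_inter] at hk
        obtain ⟨hk1, hk2⟩ := hk
        by_cases hki : k = i
        · exact Finset.mem_insert.2 (Or.inl hki)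
        refine Finset.mem_insert.2 (Or.inr ?_)
        by_cases hkj : k = j
        · exact Finset.mem_insert.2 (Or.inl hkj)
        refine Finset.mem_insert.2 (Or.inr ?_)
        rw [nearNbhd, Finset.mem_filter, one_mul] at hk1 hk2
        refine Finset.mem_filter.2 ⟨?_, ?_⟩
        · rw [hUdef]
          exact Finset.mem_erase.2 ⟨hkj, Finset.mem_erase.2 ⟨hki, Finset.mem_univ _⟩⟩
        · show 2 * a ≤ _
          have hsum : ∑ m, signVec (ω k) m * (signVec (ω i) m + signVec (ω j) m) =
              (∑ m : Fin d, signVec (ω k) m * signVec (ω i) m) +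
                ∑ m : Fin d, signVec (ω k) m * signVec (ω j) m := by
            rw [← Finset.sum_add_distrib]
            exact Finset.sum_congr rfl fun m _ => by ring
          rw [hsum, hadef]
          linarith [hk1.2, hk2.2]
      have hchain : (nearNbhd (fun u => signVec (ω u)) 1 i ∩
          nearNbhd (fun u => signVec (ω u)) 1 j).card ≤
          2 + ((U i j).filter (fun k => Q (ω i) (ω j) (ω k))).card := by
        have c1 := Finset.card_le_card hsub
        have c2 := Finset.card_insert_le i (insert j ((U i j).filter (fun k => Q (ω i) (ω j) (ω k))))
        have c3 := Finset.card_insert_le j ((U i j).filter (fun k => Q (ω i) (ω j) (ω k)))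
        omega
      have hfl : ⌊B⌋₊ < (nearNbhd (fun u => signVec (ω u)) 1 i ∩
          nearNbhd (fun u => signVec (ω u)) 1 j).card := by
        rw [Nat.floor_lt hB0]
        exact hgt
      have hcnt2 : ⌊B⌋₊ < 2 + ((U i j).filter (fun k => Q (ω i) (ω j) (ω k))).card :=
        lt_of_lt_of_le hfl hchain
      show t ≤ ((U i j).filter (fun k => Q (ω i) (ω j) (ω k))).card
      omega
  -- ### card bound
  have hchoosenn : (0:ℝ) ≤ ((n-2).choose t : ℝ) := by positivity
  have hBadcard : ((Bad).card : ℝ) ≤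
      (n:ℝ)^2 * (2 ^ (n*d) * Real.exp (-(4 * Real.log n)) +
        ((n-2).choose t : ℝ) * (2 ^ (n*d) * q₂ ^ t)) := by
    have h1 : (Bad.card : ℝ) ≤ ∑ p ∈ (univ : Finset (Fin n)).offDiag,
        (((E1 p.1 p.2 ∪ E2 p.1 p.2)).card : ℝ) := by
      have := (Finset.card_le_card badcover).trans
        (Finset.card_biUnion_le (s := univ.offDiag) (t := fun p => E1 p.1 p.2 ∪ E2 p.1 p.2))
      exact_mod_cast this
    have h2 : ∀ p ∈ (univ : Finset (Fin n)).offDiag,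
        (((E1 p.1 p.2 ∪ E2 p.1 p.2)).card : ℝ) ≤
        2 ^ (n*d) * Real.exp (-(4 * Real.log n)) +
          ((n-2).choose t : ℝ) * (2 ^ (n*d) * q₂ ^ t) := by
      intro p hp
      rw [Finset.mem_offDiag] at hp
      have hu := Finset.card_union_le (E1 p.1 p.2) (E2 p.1 p.2)
      calc ((E1 p.1 p.2 ∪ E2 p.1 p.2).card : ℝ)
          ≤ ((E1 p.1 p.2).card : ℝ) + ((E2 p.1 p.2).card : ℝ) := by exact_mod_cast hu
        _ ≤ _ := add_le_add (hE1bound p.1 p.2 hp.2.2) (hE2bound p.1 p.2 hp.2.2)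
    have h3 : ((univ : Finset (Fin n)).offDiag.card : ℝ) ≤ (n:ℝ)^2 := by
      rw [Finset.offDiag_card, Finset.card_univ, Fintype.card_fin]
      have : n * n - n ≤ n * n := Nat.sub_le _ _
      calc ((n * n - n : ℕ) : ℝ) ≤ ((n * n : ℕ) : ℝ) := by exact_mod_cast this
        _ = (n:ℝ)^2 := by push_cast; ring
    have hconstnn : (0:ℝ) ≤ 2 ^ (n*d) * Real.exp (-(4 * Real.log n)) +
        ((n-2).choose t : ℝ) * (2 ^ (n*d) * q₂ ^ t) := by positivity
    calc (Bad.card:ℝ) ≤ ∑ p ∈ (univ : Finset (Fin n)).offDiag,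
          (((E1 p.1 p.2 ∪ E2 p.1 p.2)).card : ℝ) := h1
      _ ≤ ∑ _p ∈ (univ : Finset (Fin n)).offDiag,
          (2 ^ (n*d) * Real.exp (-(4 * Real.log n)) +
            ((n-2).choose t : ℝ) * (2 ^ (n*d) * q₂ ^ t)) := Finset.sum_le_sum h2
      _ = ((univ : Finset (Fin n)).offDiag.card : ℝ) *
          (2 ^ (n*d) * Real.exp (-(4 * Real.log n)) +
            ((n-2).choose t : ℝ) * (2 ^ (n*d) * q₂ ^ t)) := by
          rw [Finset.sum_const, nsmul_eq_mul]
      _ ≤ _ := mul_le_mul_of_nonneg_right h3 hconstnn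
  -- ### numerics part 1
  have hn100 : (100:ℝ) ≤ (n:ℝ) := by exact_mod_cast hn
  have hpart1 : (n:ℝ)^2 * Real.exp (-(4 * Real.log n)) ≤ 1/10000 := by
    have he : Real.exp (-(4 * Real.log n)) = ((n:ℝ)^(4:ℕ))⁻¹ := by
      rw [Real.exp_neg]
      congr 1
      rw [show (4:ℝ) * Real.log n = ((4:ℕ):ℝ) * Real.log n by norm_num,
        Real.exp_nat_mul, Real.exp_log hn0]
    rw [he, ← div_eq_mul_inv, div_le_div_iff₀ (by positivity) (by norm_num)]
    have hsq : (10000:ℝ) ≤ (n:ℝ)^2 := by nlinarith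
    nlinarith [hsq, sq_nonneg ((n:ℝ))]
  -- ### numerics part 2
  have hpart2 : (n:ℝ)^2 * (((n-2).choose t : ℝ) * q₂ ^ t) ≤ 1/10000 := by
    have hC : (((n-2).choose t : ℕ) : ℝ) ≤ (n:ℝ)^t / (t.factorial : ℝ) := by
      rw [le_div_iff₀ (by exact_mod_cast t.factorial_pos : (0:ℝ) < (t.factorial:ℝ))]
      have h1 : (n-2).choose t ≤ n.choose t := Nat.choose_le_choose t (by omega)
      have h2 : n.choose t * t.factorial ≤ n ^ t := by
        calc n.choose t * t.factorial = t.factorial * n.choose t := mul_comm _ _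
          _ = n.descFactorial t := (Nat.descFactorial_eq_factorial_mul_choose n t).symm
          _ ≤ n ^ t := Nat.descFactorial_le_pow n t
      calc (((n-2).choose t:ℕ):ℝ) * t.factorial ≤ ((n.choose t : ℕ):ℝ) * t.factorial := by
            have : ((n-2).choose t:ℝ) ≤ (n.choose t:ℝ) := by exact_mod_cast h1
            exact mul_le_mul_of_nonneg_right this (by positivity)
        _ ≤ (n:ℝ)^t := by exact_mod_cast h2
    have hfact : (t:ℝ)^t ≤ Real.exp 1 ^ t * t.factorial := by
      have h := Real.pow_div_factorial_le_exp (x := (t:ℝ)) (by positivity) t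
      rw [div_le_iff₀ (by exact_mod_cast t.factorial_pos : (0:ℝ) < (t.factorial:ℝ))] at h
      rw [show Real.exp (t:ℝ) = Real.exp 1 ^ t by rw [← Real.exp_nat_mul, mul_one]] at h
      exact h
    have hhalf : M ^ t / (t.factorial:ℝ) ≤ (1/2:ℝ)^t := by
      have step : M ^ t / (t.factorial:ℝ) ≤ (M * Real.exp 1 / t)^t := by
        rw [div_pow, mul_pow]
        rw [div_le_div_iff₀ (by exact_mod_cast t.factorial_pos : (0:ℝ) < (t.factorial:ℝ))
          (by positivity)]
        calc M^t * (t:ℝ)^t ≤ M^t * (Real.exp 1 ^ t * t.factorial) :=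
              mul_le_mul_of_nonneg_left hfact (by positivity)
          _ = M^t * Real.exp 1^t * t.factorial := by ring
      refine step.trans (pow_le_pow_left₀ (by positivity) ?_ t)
      have he3 : Real.exp 1 ≤ 3 := by
        have := Real.exp_one_lt_d9; linarith
      rw [div_le_iff₀ htpos]
      have h8M : 8 * M ≤ (t:ℝ) := by linarith
      nlinarith [hM1, Real.exp_pos 1]
    have hpow : ((1:ℝ)/2)^t ≤ 4 / (n:ℝ)^(10:ℕ) := by
      have h2t : (n:ℝ)^(10:ℕ) / 4 ≤ (2:ℝ)^(t:ℕ) := by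
        have e2 : (2:ℝ) ^ (10 * L - 2) ≤ (2:ℝ) ^ ((t:ℕ):ℝ) := by
          apply Real.rpow_le_rpow_of_exponent_le (by norm_num)
          linarith
        have e3 : (2:ℝ) ^ (10 * L - 2) = (n:ℝ)^(10:ℕ) / 4 := by
          rw [Real.rpow_sub (by norm_num), show (10:ℝ)*L = L*10 by ring,
            Real.rpow_mul (by norm_num : (0:ℝ) ≤ 2), hLdef,
            Real.rpow_logb (by norm_num) (by norm_num) hn0,
            show ((10:ℝ)) = ((10:ℕ):ℝ) by norm_num, Real.rpow_natCast,
            show ((2:ℝ)) = ((2:ℕ):ℝ) by norm_num, Real.rpow_natCast]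
          norm_num
        rw [Real.rpow_natCast] at e2
        linarith
      have e4 : ((1:ℝ)/2)^t = ((2:ℝ)^t)⁻¹ := by
        rw [one_div, inv_pow]
      have e5 : (4:ℝ) / (n:ℝ)^(10:ℕ) = ((n:ℝ)^(10:ℕ) / 4)⁻¹ := by
        rw [inv_div]
      rw [e4, e5]
      exact inv_anti₀ (by positivity) h2t
    have hMt : ((n:ℝ) * q₂)^t ≤ M ^ t := pow_le_pow_left₀ (by positivity) hnq₂ t
    calc (n:ℝ)^2 * (((n-2).choose t : ℝ) * q₂ ^ t)
        ≤ (n:ℝ)^2 * (((n:ℝ)^t / (t.factorial : ℝ)) * q₂ ^ t) := by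
          have : (((n-2).choose t : ℝ) * q₂ ^ t) ≤ ((n:ℝ)^t / (t.factorial : ℝ)) * q₂ ^ t :=
            mul_le_mul_of_nonneg_right hC (by positivity)
          exact mul_le_mul_of_nonneg_left this (by positivity)
      _ = (n:ℝ)^2 * (((n:ℝ) * q₂)^t / (t.factorial : ℝ)) := by
          rw [mul_pow]; ring
      _ ≤ (n:ℝ)^2 * (M^t / (t.factorial : ℝ)) := by
          have h9 : ((n:ℝ) * q₂)^t / (t.factorial : ℝ) ≤ M^t / (t.factorial : ℝ) := by
            gcongr
          exact mul_le_mul_of_nonneg_left h9 (by positivity)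
      _ ≤ (n:ℝ)^2 * ((1/2:ℝ)^t) := mul_le_mul_of_nonneg_left hhalf (by positivity)
      _ ≤ (n:ℝ)^2 * (4 / (n:ℝ)^(10:ℕ)) := mul_le_mul_of_nonneg_left hpow (by positivity)
      _ = 4 / (n:ℝ)^(8:ℕ) := by
          field_simp
      _ ≤ 1/10000 := by
          rw [div_le_div_iff₀ (by positivity) (by norm_num)]
          have h8 : (100:ℝ)^(8:ℕ) ≤ (n:ℝ)^(8:ℕ) := pow_le_pow_left₀ (by norm_num) hn100 8
          norm_num at h8 ⊢
          linarith
  -- ### conclusion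
  rw [← @Nat.cast_le ℝ]
  push_cast
  have hP : (0:ℝ) < (2:ℝ)^(n*d) := by positivity
  have e : (n:ℝ)^2 * (2 ^ (n*d) * Real.exp (-(4 * Real.log n)) +
      ((n-2).choose t : ℝ) * (2 ^ (n*d) * q₂ ^ t)) =
      (2:ℝ)^(n*d) * ((n:ℝ)^2 * Real.exp (-(4*Real.log n))) +
      (2:ℝ)^(n*d) * ((n:ℝ)^2 * (((n-2).choose t : ℝ) * q₂^t)) := by ring
  rw [e] at hBadcard
  have b1 : (2:ℝ)^(n*d) * ((n:ℝ)^2 * Real.exp (-(4*Real.log n))) ≤ (2:ℝ)^(n*d)*(1/10000) :=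
    mul_le_mul_of_nonneg_left hpart1 hP.le
  have b2 : (2:ℝ)^(n*d) * ((n:ℝ)^2 * (((n-2).choose t : ℝ) * q₂^t)) ≤ (2:ℝ)^(n*d)*(1/10000) :=
    mul_le_mul_of_nonneg_left hpart2 hP.le
  linarith

/-- Neighborhood intersections are small: for universal constants `c₁` and `c`,
for all sufficiently large `n` and all `d ≥ c₁ log₂ n`, there is `c_h ∈ [1/3, 1]`
such that, with probability at least `99/100`, every pair of distinct
near-neighborhoods of `n` independent uniform random sign vectors intersects in at
most `10 max(log₂ n, n^{c √(log₂ n / d)})` elements. -/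
theorem near_neighborhood_intersections_are_small :
    ∃ c₁ c : ℝ, 0 < c₁ ∧ 0 < c ∧ ∃ N : ℕ, ∀ n : ℕ, N ≤ n → ∀ d : ℕ,
      c₁ * Real.logb 2 n ≤ (d : ℝ) →
      ∃ ch : ℝ, ch ∈ Set.Icc (1/3 : ℝ) 1 ∧
        (99 : ENNReal) / 100 ≤
          (PMF.uniformOfFintype (Fin n → Fin d → Bool)).toMeasure
            {ω | ∀ i j : Fin n, i ≠ j →
              ((nearNbhd (fun u => signVec (ω u)) ch i ∩
                  nearNbhd (fun u => signVec (ω u)) ch j).card : ℝ) ≤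
                10 * max (Real.logb 2 n)
                  ((n : ℝ) ^ (c * Real.sqrt (Real.logb 2 n / (d : ℝ))))} := by
  classical
  refine ⟨100, 3, by norm_num, by norm_num, 100, ?_⟩
  intro n hn d hd
  refine ⟨1, ⟨by norm_num, le_refl 1⟩, ?_⟩
  have hn0 : 0 < n := by omega
  set pred : (Fin n → Fin d → Bool) → Prop := fun ω => ∀ i j : Fin n, i ≠ j →
      ((nearNbhd (fun u => signVec (ω u)) 1 i ∩
          nearNbhd (fun u => signVec (ω u)) 1 j).card : ℝ) ≤
        10 * max (Real.logb 2 n)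
          ((n : ℝ) ^ ((3:ℝ) * Real.sqrt (Real.logb 2 n / (d : ℝ)))) with hpred
  have hkey : 100 * (univ.filter (fun ω => ¬ pred ω)).card ≤ 2 ^ (n * d) :=
    bad_card_bound n d hn hd
  have hcardΩ : Fintype.card (Fin n → Fin d → Bool) = 2 ^ (n * d) := by
    rw [Fintype.card_fun]
    rw [Fintype.card_fun]
    simp [← pow_mul, mul_comm]
  have hsplit : (univ.filter pred).card + (univ.filter (fun ω => ¬ pred ω)).card =
      2 ^ (n * d) := by
    rw [Finset.card_filter_add_card_filter_not (p := pred), Finset.card_univ, hcardΩ]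
  have hGn : 99 * 2 ^ (n * d) ≤ 100 * (univ.filter pred).card := by omega
  -- measure computation
  have hmeas : (PMF.uniformOfFintype (Fin n → Fin d → Bool)).toMeasure
      (↑(univ.filter pred) : Set (Fin n → Fin d → Bool)) =
      ((univ.filter pred).card : ENNReal) / (2 ^ (n * d) : ENNReal) := by
    rw [PMF.toMeasure_uniformOfFintype_apply _ (Set.Finite.measurableSet (Set.toFinite _))]
    congr 1
    · rw [Fintype.card_subtype]
      norm_cast
      rw [Finset.filter_mem_eq_inter, Finset.univ_inter]
    · rw [hcardΩ]; push_cast; ring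
  have hsub : (↑(univ.filter pred) : Set (Fin n → Fin d → Bool)) ⊆
      {ω | pred ω} := by
    intro ω hω
    simp only [Finset.coe_filter, Set.mem_setOf_eq] at hω ⊢
    exact hω.2
  have hmono := MeasureTheory.measure_mono (μ := (PMF.uniformOfFintype (Fin n → Fin d → Bool)).toMeasure) hsub
  have hfrac : (99 : ENNReal) / 100 ≤
      ((univ.filter pred).card : ENNReal) / (2 ^ (n * d) : ENNReal) := by
    have hb0 : ((2:ENNReal) ^ (n*d)) ≠ 0 := pow_ne_zero _ (by norm_num)
    have hbt : ((2:ENNReal) ^ (n*d)) ≠ ⊤ := ENNReal.pow_ne_top (by norm_num)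
    rw [ENNReal.le_div_iff_mul_le (Or.inl hb0) (Or.inl hbt)]
    rw [div_eq_mul_inv, mul_right_comm, ← div_eq_mul_inv]
    rw [ENNReal.div_le_iff_le_mul (Or.inl (by norm_num)) (Or.inl (by norm_num))]
    calc (99:ENNReal) * 2 ^ (n*d) = ((99 * 2 ^ (n*d) : ℕ) : ENNReal) := by push_cast; ring
      _ ≤ ((100 * (univ.filter pred).card : ℕ) : ENNReal) := by exact_mod_cast hGn
      _ = ((univ.filter pred).card : ENNReal) * 100 := by push_cast; ring
  calc (99 : ENNReal) / 100 ≤ ((univ.filter pred).card : ENNReal) / (2 ^ (n * d) : ENNReal) := hfrac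
    _ = _ := hmeas.symm
    _ ≤ _ := hmono
end

section
/- Let n ≥ 3 and consider the n points in ℝ^{n−1} given by x_i = e_i (the i-th standard basis vector) for 1 ≤ i ≤ n − 1 and x_n = 0 (the zero vector). Then every navigable graph for x_1, …, x_n under the Euclidean distance contains the edge (n, i) for every i ∈ {1, …, n − 1}; in particular, vertex n has out-degree at least n − 1. -/
/-- Euclidean distance on `ℝ^d`. -/
noncomputable def euclid {d : ℕ} (x y : Fin d → ℝ) : ℝ :=
  Real.sqrt (∑ k : Fin d, (x k - y k) ^ 2)

/-- Standard-basis point set: `x i = e_i` for `i < n - 1` and `x` of the last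
index is the zero vector (all in `ℝ^{n-1}`). -/
def basisPoints (n : ℕ) : Fin n → Fin (n - 1) → ℝ :=
  fun i k => if (i : ℕ) = (k : ℕ) then 1 else 0

lemma euclid_basis_last (n : ℕ) (i j : Fin n) (hi : (i:ℕ) < n-1) (hj : ¬ (j:ℕ) < n-1) :
    euclid (basisPoints n i) (basisPoints n j) = 1 := by
  unfold euclid basisPoints
  have h : ∀ k ∈ (Finset.univ : Finset (Fin (n-1))),
      ((if (i:ℕ) = (k:ℕ) then (1:ℝ) else 0) - (if (j:ℕ) = (k:ℕ) then 1 else 0))^2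
      = if (⟨(i:ℕ), hi⟩ : Fin (n-1)) = k then 1 else 0 := by
    intro k _
    have hjk : (j:ℕ) ≠ (k:ℕ) := by have := k.isLt; omega
    by_cases h : (i:ℕ) = (k:ℕ) <;> simp [Fin.ext_iff, h, hjk]
  rw [Finset.sum_congr rfl h, Finset.sum_ite_eq]
  simp

lemma euclid_basis_basis (n : ℕ) (i j : Fin n) (hi : (i:ℕ) < n-1) (hj : (j:ℕ) < n-1)
    (hij : i ≠ j) :
    euclid (basisPoints n i) (basisPoints n j) = Real.sqrt 2 := by
  unfold euclid basisPoints
  congr 1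
  have h : ∀ k ∈ (Finset.univ : Finset (Fin (n-1))),
      ((if (i:ℕ) = (k:ℕ) then (1:ℝ) else 0) - (if (j:ℕ) = (k:ℕ) then 1 else 0))^2
      = (if (⟨(i:ℕ), hi⟩ : Fin (n-1)) = k then 1 else 0)
        + (if (⟨(j:ℕ), hj⟩ : Fin (n-1)) = k then 1 else 0) := by
    intro k _
    have hij' : (i:ℕ) ≠ (j:ℕ) := fun h => hij (Fin.ext h)
    by_cases h1 : (i:ℕ) = (k:ℕ)
    · have h2 : (j:ℕ) ≠ (k:ℕ) := by omega
      simp [Fin.ext_iff, h1, h2]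
    · by_cases h2 : (j:ℕ) = (k:ℕ) <;> simp [Fin.ext_iff, h1, h2]
  rw [Finset.sum_congr rfl h, Finset.sum_add_distrib, Finset.sum_ite_eq, Finset.sum_ite_eq]
  simp; norm_num

lemma euclid_self {d : ℕ} (x : Fin d → ℝ) : euclid x x = 0 := by
  unfold euclid; simp

/-- For the point set `e_1, …, e_{n-1}, 0` in `ℝ^{n-1}`, every navigable graph
contains every edge from the (zero-vector) vertex `n` to each other vertex, so
that vertex has out-degree at least `n - 1`. -/
theorem zero_vector_has_full_out_degree (n : ℕ) (hn : 3 ≤ n)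
    (E : Finset (Fin n × Fin n))
    (hE : Navigable (basisPoints n) euclid E) :
    (∀ i : Fin n, (i : ℕ) < n - 1 → ((⟨n - 1, by omega⟩ : Fin n), i) ∈ E) ∧
      n - 1 ≤ (E.filter (fun e : Fin n × Fin n =>
        e.1 = (⟨n - 1, by omega⟩ : Fin n))).card := by
  set s : Fin n := ⟨n - 1, by omega⟩ with hs
  have key : ∀ i : Fin n, (i : ℕ) < n - 1 → (s, i) ∈ E := by
    intro i hi
    have hsi : s ≠ i := by
      intro h; rw [Fin.ext_iff] at h; simp [hs] at h; omega
    obtain ⟨v, hvE, hv⟩ := hE i s hsi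
    have hDs : euclid (basisPoints n i) (basisPoints n s) = 1 :=
      euclid_basis_last n i s hi (by simp [hs])
    have hvi : v = i := by
      by_contra hne
      by_cases hv' : (v:ℕ) < n - 1
      · have hD : euclid (basisPoints n i) (basisPoints n v) = Real.sqrt 2 :=
          euclid_basis_basis n i v hi hv' (fun h => hne h.symm)
        have h2 : (1:ℝ) < Real.sqrt 2 := by
          rw [show (1:ℝ) = Real.sqrt 1 by simp]
          exact Real.sqrt_lt_sqrt (by norm_num) (by norm_num)
        rw [hD, hDs] at hv
        rcases hv with h | ⟨h, _⟩ <;> linarith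
      · have hvs : v = s := by
          rw [Fin.ext_iff]; simp [hs]; have := v.isLt; omega
        rw [hvs, hDs] at hv
        rcases hv with h | ⟨_, h⟩
        · linarith
        · exact lt_irrefl _ h
    rwa [hvi] at hvE
  refine ⟨key, ?_⟩
  have hsub : (Finset.univ : Finset (Fin (n-1))).image
      (fun i : Fin (n-1) => ((s, (⟨(i:ℕ), by omega⟩ : Fin n)) : Fin n × Fin n))
      ⊆ E.filter (fun e : Fin n × Fin n => e.1 = s) := by
    intro e he
    simp only [Finset.mem_image] at he
    obtain ⟨i, _, rfl⟩ := he
    exact Finset.mem_filter.mpr ⟨key _ i.isLt, rfl⟩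
  have hinj : Function.Injective
      (fun i : Fin (n-1) => ((s, (⟨(i:ℕ), by omega⟩ : Fin n)) : Fin n × Fin n)) := by
    intro a b h
    simp only [Prod.mk.injEq, Fin.mk.injEq] at h
    exact Fin.ext h.2
  calc n - 1 = ((Finset.univ : Finset (Fin (n-1))).image _).card := by
        rw [Finset.card_image_of_injective _ hinj]; simp
    _ ≤ _ := Finset.card_le_card hsub
end

section
/- There exists a universal constant c > 0 such that for every sufficiently large n there exist n distinct points x_1, …, x_n ∈ ℝ^d with d = ⌈c·log₂ n⌉ such that every navigable graph for x_1, …, x_n under the Euclidean distance has some vertex with out-degree at least n − 1. -/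
open Finset

lemma sum_bound (d s : ℕ) (h : 4 * s + 1 ≤ d) :
    (∑ i ∈ range (s + 1), d.choose i) * 3 ^ (d - s) ≤ 4 ^ d := by
  have h1 : (∑ i ∈ range (s + 1), d.choose i) * 3 ^ (d - s)
      ≤ ∑ i ∈ range (s + 1), d.choose i * 3 ^ (d - i) := by
    rw [Finset.sum_mul]
    apply Finset.sum_le_sum
    intro i hi
    have hi' : i ≤ s := by simpa [Nat.lt_succ_iff] using hi
    exact Nat.mul_le_mul_left _ (Nat.pow_le_pow_right (by norm_num) (by omega))
  have h2 : ∑ i ∈ range (s + 1), d.choose i * 3 ^ (d - i)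
      ≤ ∑ i ∈ range (d + 1), d.choose i * 3 ^ (d - i) :=
    Finset.sum_le_sum_of_subset (Finset.range_subset_range.2 (by omega))
  have h3 : ∑ i ∈ range (d + 1), d.choose i * 3 ^ (d - i) = 4 ^ d := by
    have := add_pow (1 : ℕ) 3 d
    simp only [one_pow, one_mul, Nat.cast_id] at this
    rw [show (4:ℕ) = 1 + 3 by norm_num, this]
    exact Finset.sum_congr rfl fun i _ => mul_comm _ _
  omega

lemma ball_card (d s : ℕ) (c : Fin d → Bool) :
    ((univ : Finset (Fin d → Bool)).filter (fun x => hammingDist x c ≤ s)).card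
      ≤ ∑ i ∈ range (s + 1), d.choose i := by
  have hT : ((range (s+1)).biUnion (fun i => powersetCard i (univ : Finset (Fin d)))).card
      = ∑ i ∈ range (s+1), d.choose i := by
    rw [Finset.card_biUnion]
    · simp [Finset.card_powersetCard]
    · intro i _ j _ hij
      simp only [Finset.disjoint_left, Finset.mem_powersetCard]
      rintro A ⟨_, h1⟩ ⟨_, h2⟩
      omega
  rw [← hT]
  apply Finset.card_le_card_of_injOn (fun x => univ.filter (fun k => x k ≠ c k))
  · intro x hx
    simp only [Finset.mem_coe, Finset.mem_filter, Finset.mem_univ, true_and] at hx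
    simp only [Finset.mem_coe, Finset.mem_biUnion, Finset.mem_range, Finset.mem_powersetCard]
    exact ⟨hammingDist x c, by omega, Finset.filter_subset _ _, rfl⟩
  · intro x _ y _ hxy
    simp only at hxy
    funext k
    by_cases h : x k = c k
    · by_cases h' : y k = c k
      · rw [h, h']
      · exfalso
        have : k ∈ univ.filter (fun k => y k ≠ c k) := by simpa using h'
        rw [← hxy] at this
        simp at this
        exact this h
    · have : k ∈ univ.filter (fun k => x k ≠ c k) := by simpa using h
      rw [hxy] at this
      simp at this
      cases hx : x k <;> cases hy : y k <;> simp_all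

lemma gv (d s : ℕ) :
    ∃ C : Finset (Fin d → Bool),
      (∀ x ∈ C, ∀ y ∈ C, x ≠ y → s + 1 ≤ hammingDist x y) ∧
      2 ^ d ≤ C.card * ∑ i ∈ range (s + 1), d.choose i := by
  classical
  set P : Finset (Fin d → Bool) → Prop :=
    fun C => ∀ x ∈ C, ∀ y ∈ C, x ≠ y → s + 1 ≤ hammingDist x y with hP
  have hfam : ((univ : Finset (Finset (Fin d → Bool))).filter P).Nonempty := by
    refine ⟨∅, ?_⟩
    simp [hP]
  obtain ⟨C, hCmem, hCmax⟩ := Finset.exists_max_image _ Finset.card hfam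
  have hCP : P C := (Finset.mem_filter.1 hCmem).2
  have hcover : ∀ x : Fin d → Bool, ∃ c ∈ C, hammingDist x c ≤ s := by
    intro x
    by_contra hcon
    push_neg at hcon
    have hxC : x ∉ C := by
      intro hx
      have := hcon x hx
      simp [hammingDist_self] at this
    have hPins : P (insert x C) := by
      intro a ha b hb hab
      rcases Finset.mem_insert.1 ha with rfl | ha' <;>
        rcases Finset.mem_insert.1 hb with rfl | hb'
      · exact absurd rfl hab
      · exact hcon b hb'
      · rw [hammingDist_comm]; exact hcon a ha'
      · exact hCP a ha' b hb' hab
    have hle := hCmax (insert x C) (Finset.mem_filter.2 ⟨Finset.mem_univ _, hPins⟩)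
    rw [Finset.card_insert_of_notMem hxC] at hle
    omega
  have hsub : (univ : Finset (Fin d → Bool)) ⊆
      C.biUnion (fun c => univ.filter (fun x => hammingDist x c ≤ s)) := by
    intro x _
    obtain ⟨c, hc, hdist⟩ := hcover x
    exact Finset.mem_biUnion.2 ⟨c, hc, by simp [hdist]⟩
  have h1 : (2 : ℕ) ^ d ≤ ∑ c ∈ C, ((univ : Finset (Fin d → Bool)).filter
      (fun x => hammingDist x c ≤ s)).card := by
    calc (2:ℕ)^d = (univ : Finset (Fin d → Bool)).card := by simp
    _ ≤ _ := le_trans (Finset.card_le_card hsub) (Finset.card_biUnion_le)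
  refine ⟨C, hCP, le_trans h1 ?_⟩
  calc ∑ c ∈ C, ((univ : Finset (Fin d → Bool)).filter
      (fun x => hammingDist x c ≤ s)).card
      ≤ ∑ _c ∈ C, ∑ i ∈ range (s + 1), d.choose i :=
        Finset.sum_le_sum (fun c _ => ball_card d s c)
    _ = C.card * ∑ i ∈ range (s + 1), d.choose i := by
        rw [Finset.sum_const, smul_eq_mul]

lemma numA (n : ℕ) (hn : 2 ≤ n) :
    (n:ℝ)^(10:ℕ) ≤ (2:ℝ)^(⌈(10:ℝ) * Real.logb 2 n⌉₊ : ℕ) := by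
  set d : ℕ := ⌈(10:ℝ) * Real.logb 2 n⌉₊ with hd
  have hn0 : (0:ℝ) < n := by positivity
  have hlog : (10:ℝ) * Real.logb 2 n ≤ d := Nat.le_ceil _
  have h1 : (n:ℝ)^(10:ℕ) = (2:ℝ) ^ ((10:ℝ) * Real.logb 2 n) := by
    rw [mul_comm, Real.rpow_mul (by norm_num), Real.rpow_logb (by norm_num) (by norm_num) hn0,
      show ((10:ℝ)) = ((10:ℕ):ℝ) by norm_num, Real.rpow_natCast]
  rw [h1, ← Real.rpow_natCast 2 d]
  exact Real.rpow_le_rpow_of_exponent_le (by norm_num) hlog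

lemma numB (n : ℕ) (hn : 2 ≤ n) : 10 ≤ ⌈(10:ℝ) * Real.logb 2 n⌉₊ := by
  have h1 : (1:ℝ) ≤ Real.logb 2 n := by
    rw [show (1:ℝ) = Real.logb 2 2 by simp]
    exact Real.logb_le_logb_of_le (by norm_num) (by norm_num) (by exact_mod_cast hn)
  calc (10:ℕ) = ⌈(10:ℝ)⌉₊ := by simp
    _ ≤ ⌈(10:ℝ) * Real.logb 2 n⌉₊ := Nat.ceil_le_ceil (by nlinarith)

lemma numC (n d s : ℕ) (h10 : n^10 ≤ 2^d) (hs : s = (d-1)/4) (hd : 10 ≤ d) :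
    n * 2^d ≤ 3^(d-s) := by
  have key : (n * 2^d)^20 ≤ (3^(d-s))^20 := by
    calc (n*2^d)^20 = n^20 * 2^(d*20) := by rw [mul_pow, ← pow_mul]
      _ = (n^10)^2 * 2^(d*20) := by rw [← pow_mul]
      _ ≤ (2^d)^2 * 2^(d*20) := Nat.mul_le_mul_right _ (Nat.pow_le_pow_left h10 2)
      _ = 2^(d*2) * 2^(d*20) := by rw [← pow_mul]
      _ = 2^(22*d) := by rw [← pow_add]; congr 1; omega
      _ = (2^22)^d := by rw [pow_mul]
      _ ≤ (3^15)^d := Nat.pow_le_pow_left (by norm_num) d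
      _ = 3^(15*d) := by rw [← pow_mul]
      _ ≤ 3^((d-s)*20) := Nat.pow_le_pow_right (by norm_num) (by omega)
      _ = (3^(d-s))^20 := by rw [pow_mul]
  exact (Nat.pow_le_pow_iff_left (by norm_num)).1 key

/-- Maximum-degree lower bound in `O(log n)` dimensions: for a universal constant
`c > 0`, for all sufficiently large `n`, there are `n` distinct points in `ℝ^d`
with `d = ⌈c log₂ n⌉` such that every navigable graph for them under the Euclidean
distance has a vertex of out-degree at least `n - 1`. -/
theorem max_degree_lower_bound :
    ∃ c : ℝ, 0 < c ∧ ∃ N : ℕ, ∀ n : ℕ, N ≤ n →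
      ∃ x : Fin n → Fin ⌈c * Real.logb 2 n⌉₊ → ℝ,
        Function.Injective x ∧
        ∀ E : Finset (Fin n × Fin n), Navigable x euclid E →
          ∃ u : Fin n,
            n - 1 ≤ (E.filter (fun e : Fin n × Fin n => e.1 = u)).card := by
  classical
  refine ⟨10, by norm_num, 2, fun n hn => ?_⟩
  set d : ℕ := ⌈(10:ℝ) * Real.logb 2 n⌉₊ with hddef
  have hd10 : 10 ≤ d := numB n hn
  have h10 : n^10 ≤ 2^d := by exact_mod_cast numA n hn
  set s : ℕ := (d - 1) / 4 with hsdef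
  obtain ⟨C, hCdist, hCcount⟩ := gv d s
  set V : ℕ := ∑ i ∈ range (s + 1), d.choose i with hVdef
  have hV1 : 1 ≤ V := by
    have : d.choose 0 ≤ V := Finset.single_le_sum (f := fun i => d.choose i)
      (fun i _ => Nat.zero_le _) (Finset.mem_range.2 (by omega))
    simpa using this
  have hVbound : V * 3^(d-s) ≤ 4^d := sum_bound d s (by omega)
  have hn2d : n * 2^d ≤ 3^(d-s) := numC n d s h10 hsdef hd10
  have hnC : n ≤ C.card := by
    have h1 : n * V * 3^(d-s) ≤ 2^d * 3^(d-s) := by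
      calc n * V * 3^(d-s) = n * (V * 3^(d-s)) := by ring
        _ ≤ n * 4^d := Nat.mul_le_mul_left _ hVbound
        _ = (n * 2^d) * 2^d := by rw [show (4:ℕ) = 2*2 from rfl, mul_pow]; ring
        _ ≤ 3^(d-s) * 2^d := Nat.mul_le_mul_right _ hn2d
        _ = 2^d * 3^(d-s) := mul_comm _ _
    have h2 : n * V ≤ 2^d := Nat.le_of_mul_le_mul_right h1 (by positivity)
    have h3 : n * V ≤ C.card * V := le_trans h2 hCcount
    exact Nat.le_of_mul_le_mul_right h3 (by omega)
  obtain ⟨C', hC'sub, hC'card⟩ := Finset.exists_subset_card_eq hnC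
  set e := (Finset.equivFinOfCardEq hC'card).symm with hedef
  set w : Fin n → Fin d → Bool := fun t => (e t : Fin d → Bool) with hwdef
  have hwinj : Function.Injective w := fun a b h => e.injective (Subtype.ext h)
  have hwC : ∀ t, w t ∈ C := fun t => hC'sub (e t).2
  have hn0 : 0 < n := by omega
  set u0 : Fin n := ⟨0, hn0⟩ with hu0def
  set toR : Bool → ℝ := fun b => if b then 1 else 0 with htoRdef
  set x : Fin n → Fin d → ℝ :=
    fun t => if t = u0 then (fun _ => (1/2 : ℝ)) else (fun k => toR (w t k)) with hxdef
  have hx0 : x u0 = fun _ => (1/2 : ℝ) := by rw [hxdef]; simp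
  have hxt : ∀ t, t ≠ u0 → x t = fun k => toR (w t k) := by
    intro t ht; rw [hxdef]; simp [ht]
  -- distance to center
  have hdistA : ∀ t, t ≠ u0 → euclid (x t) (x u0) = Real.sqrt ((d:ℝ) * (1/4)) := by
    intro t ht
    rw [hxt t ht, hx0]
    unfold euclid
    congr 1
    have : ∀ k : Fin d, (toR (w t k) - 1/2)^2 = (1/4 : ℝ) := by
      intro k; cases w t k <;> simp [htoRdef] <;> norm_num
    rw [Finset.sum_congr rfl (fun k _ => this k)]
    simp [mul_comm]
  -- distance between codewords
  have hdistB : ∀ t v, t ≠ u0 → v ≠ u0 →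
      euclid (x t) (x v) = Real.sqrt ((hammingDist (w t) (w v) : ℝ)) := by
    intro t v ht hv
    rw [hxt t ht, hxt v hv]
    unfold euclid
    congr 1
    have step : ∀ k : Fin d, (toR (w t k) - toR (w v k))^2
        = if w t k ≠ w v k then (1:ℝ) else 0 := by
      intro k; cases w t k <;> cases w v k <;> simp [htoRdef] <;> norm_num
    rw [Finset.sum_congr rfl (fun k _ => step k)]
    rw [Finset.sum_ite, Finset.sum_const, Finset.sum_const]
    simp [hammingDist]
  refine ⟨x, ?_, ?_⟩
  · -- injectivity
    intro a b hab
    by_cases ha : a = u0 <;> by_cases hb : b = u0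
    · rw [ha, hb]
    · exfalso
      rw [ha, hx0, hxt b hb] at hab
      have := congrFun hab ⟨0, by omega⟩
      simp only [htoRdef] at this
      split_ifs at this <;> norm_num at this
    · exfalso
      rw [hb, hx0, hxt a ha] at hab
      have := congrFun hab ⟨0, by omega⟩
      simp only [htoRdef] at this
      split_ifs at this <;> norm_num at this
    · rw [hxt a ha, hxt b hb] at hab
      apply hwinj
      funext k
      have := congrFun hab k
      cases hwa : w a k <;> cases hwb : w b k <;> rw [hwa, hwb] at this <;>
        simp [htoRdef] at this <;> rfl
  · -- degree bound
    intro E hNav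
    refine ⟨u0, ?_⟩
    have hedge : ∀ t : Fin n, t ≠ u0 → (u0, t) ∈ E := by
      intro t ht
      obtain ⟨v, hvE, hv⟩ := hNav t u0 (Ne.symm ht)
      rcases hv with hlt | ⟨_, hvu⟩
      · by_cases hv0 : v = u0
        · rw [hv0] at hlt; exact absurd hlt (lt_irrefl _)
        by_cases hvt : v = t
        · rw [hvt] at hvE; exact hvE
        · exfalso
          rw [hdistA t ht, hdistB t v ht hv0] at hlt
          have hwtv : w t ≠ w v := fun h => hvt (hwinj h).symm
          have hham : s + 1 ≤ hammingDist (w t) (w v) :=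
            hCdist _ (hwC t) _ (hwC v) hwtv
          have hge : (d:ℝ) * (1/4) ≤ (hammingDist (w t) (w v) : ℝ) := by
            have : d ≤ 4 * hammingDist (w t) (w v) := by omega
            have := (Nat.cast_le (α := ℝ)).2 this
            push_cast at this
            linarith
          exact absurd hlt (not_lt.2 (Real.sqrt_le_sqrt hge))
      · exact absurd hvu (by simp [hu0def, Fin.lt_def])
    calc n - 1 = (univ.erase u0).card := by
          rw [Finset.card_erase_of_mem (Finset.mem_univ _), Finset.card_univ,
            Fintype.card_fin]
      _ ≤ (E.filter (fun e : Fin n × Fin n => e.1 = u0)).card := by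
          apply Finset.card_le_card_of_injOn (fun t => (u0, t))
          · intro t htm
            have ht : t ≠ u0 := (Finset.mem_erase.1 htm).1
            exact Finset.mem_filter.2 ⟨hedge t ht, rfl⟩
          · intro a _ b _ h
            exact congrArg Prod.snd h
end
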